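/- arXiv:1511.01298 — 11 statements merged into one kernel-verified Lean document; each statement's English description precedes it below -/
import Mathlib

section
/- Let n ≥ 2, let a ∈ 𝔹ⁿ and let f : 𝔹ⁿ∖{0} → 𝔹ⁿ∖{a} be (the restriction of) a Möbius transformation of ℝⁿ∪{∞} mapping the unit ball 𝔹ⁿ onto itself, with f(0) = a and f(𝔹ⁿ∖{0}) = 𝔹ⁿ∖{a}. Then for all x, y ∈ 𝔹ⁿ∖{0}: ((1−|a|)/(1+|a|)) · c_{𝔹ⁿ∖{0}}(x,y) ≤ c_{𝔹ⁿ∖{a}}(f(x), f(y)) ≤ ((1+|a|)/(1−|a|)) · c_{𝔹ⁿ∖{0}}(x,y). -/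
open Metric Set OnePoint
open scoped RealInnerProductSpace

/-- Euclidean `n`-space. -/
abbrev E (n : ℕ) := EuclideanSpace ℝ (Fin n)

/-- The Cassinian metric of a domain `D`:
`c_D(x,y) = sup_{p ∈ ∂D} |x-y| / (|x-p| |p-y|)`. -/
noncomputable def cassinian {n : ℕ} (D : Set (E n)) (x y : E n) : ℝ :=
  ⨆ p ∈ frontier D, dist x y / (dist x p * dist p y)

open Classical in
/-- Inversion in the sphere `S^{n-1}(c, R)`, as a self-map of `ℝⁿ ∪ {∞}`. -/
noncomputable def sphereInv {n : ℕ} (c : E n) (R : ℝ) (z : OnePoint (E n)) : OnePoint (E n) :=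
  match z with
  | OnePoint.infty => (c : OnePoint (E n))
  | OnePoint.some x => if x = c then (∞ : OnePoint (E n))
      else ((c + (R ^ 2 / ‖x - c‖ ^ 2) • (x - c) : E n) : OnePoint (E n))

/-- Reflection in the hyperplane `{x : ⟪x, u⟫ = d}` (where `u ≠ 0`),
as a self-map of `ℝⁿ ∪ {∞}`. -/
noncomputable def hypRefl {n : ℕ} (u : E n) (d : ℝ) (z : OnePoint (E n)) : OnePoint (E n) :=
  match z with
  | OnePoint.infty => (∞ : OnePoint (E n))
  | OnePoint.some x => ((x - ((2 * (⟪x, u⟫ - d)) / ‖u‖ ^ 2) • u : E n) : OnePoint (E n))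

/-- Möbius transformations of `ℝⁿ ∪ {∞}`: the group generated by inversions in spheres
and reflections in hyperplanes.  Since all the generators are involutions, the generated
group consists exactly of the finite compositions of generators. -/
inductive IsMobius (n : ℕ) : (OnePoint (E n) → OnePoint (E n)) → Prop where
  | inv (c : E n) (R : ℝ) (hR : 0 < R) : IsMobius n (sphereInv c R)
  | refl (u : E n) (d : ℝ) (hu : u ≠ 0) : IsMobius n (hypRefl u d)
  | comp (f g : OnePoint (E n) → OnePoint (E n)) :
      IsMobius n f → IsMobius n g → IsMobius n (f ∘ g)

/-!
A Möbius transformation `F` scales the chordal distance of `ℝⁿ ∪ {∞}` by a product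
`σ x * σ y` of positive factors (check it on inversions and reflections, then compose), so on
finite points `dist (F u) (F v) = ρ u * ρ v * dist u v`. Chordal continuity and injectivity
make a self-map of the ball send the unit sphere onto itself, so `F` maps the boundary
`S ∪ {0}` of `𝔹ⁿ ∖ {0}` onto the boundary `S ∪ {a}` of `𝔹ⁿ ∖ {a}`, and the Cassinian quotient
at a boundary point `p` is multiplied by `ρ p⁻²`. Comparing the images of antipodal points
(Ptolemy's inequality gives one direction) yields `ρ 0 ^ 2 = 1 - ‖a‖ ^ 2`; then
`ρ 0 * ρ p = ‖a - F p‖ ∈ [1 - ‖a‖, 1 + ‖a‖]` for `‖p‖ = 1` confines every `ρ p ^ 2` to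
`[(1 - ‖a‖) / (1 + ‖a‖), (1 + ‖a‖) / (1 - ‖a‖)]`.
-/

open EuclideanGeometry

lemma OnePoint.eq_infty_or_eq_or_exists_ne {X : Type*} (z : OnePoint X) (c : X) :
    z = ∞ ∨ z = c ∨ ∃ x : X, x ≠ c ∧ z = x := by
  cases z with
  | infty => exact .inl rfl
  | coe x => by_cases hx : x = c <;> simp [hx]

section Chordal

variable {V : Type*} [NormedAddCommGroup V]

noncomputable def chordalWeight (x : V) : ℝ := √(1 + ‖x‖ ^ 2)

lemma chordalWeight_pos (x : V) : 0 < chordalWeight x := Real.sqrt_pos.2 (by positivity)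

lemma one_le_chordalWeight (x : V) : 1 ≤ chordalWeight x :=
  Real.one_le_sqrt.2 (by nlinarith [sq_nonneg ‖x‖])

lemma chordalWeight_le_sqrt_two {x : V} (hx : ‖x‖ ≤ 1) : chordalWeight x ≤ √2 :=
  Real.sqrt_le_sqrt (by nlinarith [norm_nonneg x])

lemma norm_add_norm_le_chordalWeight_mul (x y : V) :
    ‖x‖ + ‖y‖ ≤ chordalWeight x * chordalWeight y := by
  rw [chordalWeight, chordalWeight, ← Real.sqrt_mul (by positivity),
    Real.le_sqrt (by positivity) (by positivity)]
  nlinarith [sq_nonneg (‖x‖ * ‖y‖ - 1), norm_nonneg x, norm_nonneg y]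

/-- Half the chordal distance between the stereographic images of two points on the unit
sphere of `V × ℝ`. -/
noncomputable def chordalDist : OnePoint V → OnePoint V → ℝ
  | OnePoint.infty, OnePoint.infty => 0
  | OnePoint.infty, OnePoint.some y => (chordalWeight y)⁻¹
  | OnePoint.some x, OnePoint.infty => (chordalWeight x)⁻¹
  | OnePoint.some x, OnePoint.some y => dist x y / (chordalWeight x * chordalWeight y)

@[simp] lemma chordalDist_coe_coe (x y : V) :
    chordalDist (x : OnePoint V) y = dist x y / (chordalWeight x * chordalWeight y) := rfl

@[simp] lemma chordalDist_coe_infty (x : V) :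
    chordalDist (x : OnePoint V) ∞ = (chordalWeight x)⁻¹ := rfl

@[simp] lemma chordalDist_infty_coe (y : V) :
    chordalDist ∞ (y : OnePoint V) = (chordalWeight y)⁻¹ := rfl

@[simp] lemma chordalDist_infty_infty : chordalDist (∞ : OnePoint V) ∞ = 0 := rfl

lemma chordalDist_nonneg (x y : OnePoint V) : 0 ≤ chordalDist x y := by
  have hw := chordalWeight_pos (V := V)
  cases x <;> cases y
  · exact le_rfl
  · exact (inv_pos.2 (hw _)).le
  · exact (inv_pos.2 (hw _)).le
  · exact div_nonneg dist_nonneg (mul_pos (hw _) (hw _)).le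

lemma chordalDist_le_one (x y : OnePoint V) : chordalDist x y ≤ 1 := by
  have hw := chordalWeight_pos (V := V)
  cases x <;> cases y
  · exact zero_le_one
  · exact inv_le_one_of_one_le₀ (one_le_chordalWeight _)
  · exact inv_le_one_of_one_le₀ (one_le_chordalWeight _)
  · rw [chordalDist_coe_coe, div_le_one (mul_pos (hw _) (hw _))]
    exact (dist_le_norm_add_norm _ _).trans (norm_add_norm_le_chordalWeight_mul _ _)

lemma chordalDist_coe_le_dist (x y : V) : chordalDist (x : OnePoint V) y ≤ dist x y :=
  div_le_self dist_nonneg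
    (one_le_mul_of_one_le_of_one_le (one_le_chordalWeight x) (one_le_chordalWeight y))

lemma exists_coe_eq_norm_le_of_forall_chordalDist_lt {q : OnePoint V}
    (h : ∀ ε > 0, ∃ w : V, ‖w‖ < 1 ∧ chordalDist (w : OnePoint V) q < ε) :
    ∃ q' : V, q = q' ∧ ‖q'‖ ≤ 1 := by
  have hw := chordalWeight_pos (V := V)
  cases q with
  | infty =>
    obtain ⟨w, hw1, hwq⟩ := h (√2)⁻¹ (by positivity)
    rw [chordalDist_coe_infty] at hwq
    exact absurd (inv_anti₀ (hw w) (chordalWeight_le_sqrt_two hw1.le)) hwq.not_ge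
  | coe q =>
    refine ⟨q, rfl, not_lt.1 fun hq => ?_⟩
    obtain ⟨w, hw1, hwq⟩ := h ((‖q‖ - 1) / (√2 * chordalWeight q)) (by
      have := hw q
      have : (0 : ℝ) < ‖q‖ - 1 := by linarith
      positivity)
    rw [chordalDist_coe_coe] at hwq
    have hdist : ‖q‖ - 1 ≤ dist w q := by
      linarith [norm_sub_norm_le q w, dist_eq_norm q w, dist_comm w q]
    refine hwq.not_ge (div_le_div₀ dist_nonneg hdist (mul_pos (hw w) (hw q)) ?_)
    exact mul_le_mul_of_nonneg_right (chordalWeight_le_sqrt_two hw1.le) (hw q).le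

end Chordal

structure IsDistScale {X : Type*} [PseudoMetricSpace X] (F : OnePoint X → OnePoint X)
    (ρ : X → ℝ) : Prop where
  pos {u u' : X} : F u = u' → 0 < ρ u
  dist_eq {u v u' v' : X} : F u = u' → F v = v' → dist u' v' = ρ u * ρ v * dist u v

section Generators

variable {n : ℕ}

lemma sphereInv_infty (c : E n) (R : ℝ) : sphereInv c R ∞ = c := rfl

lemma sphereInv_center (c : E n) (R : ℝ) : sphereInv c R c = ∞ := by
  simp [sphereInv]

lemma sphereInv_coe {c x : E n} (R : ℝ) (hx : x ≠ c) : sphereInv c R x = inversion c R x := by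
  simp only [sphereInv, hx, if_false, inversion, vsub_eq_sub, vadd_eq_add, div_pow, dist_eq_norm]
  congr 1
  abel

lemma sphereInv_involutive (c : E n) {R : ℝ} (hR : R ≠ 0) :
    Function.Involutive (sphereInv c R) := by
  intro z
  cases z with
  | infty => rw [sphereInv_infty, sphereInv_center]
  | coe x =>
    rcases eq_or_ne x c with rfl | hx
    · rw [sphereInv_center, sphereInv_infty]
    · have hx' : inversion c R x ≠ c := (inversion_eq_center hR).not.2 hx
      rw [sphereInv_coe R hx, sphereInv_coe R hx', inversion_inversion c hR]

noncomputable def reflectHyperplane (u : E n) (d : ℝ) (x : E n) : E n :=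
  x - ((2 * (⟪x, u⟫ - d)) / ‖u‖ ^ 2) • u

lemma hypRefl_infty (u : E n) (d : ℝ) : hypRefl u d ∞ = ∞ := rfl

lemma hypRefl_coe (u : E n) (d : ℝ) (x : E n) : hypRefl u d x = reflectHyperplane u d x := rfl

lemma reflectHyperplane_sub_reflectHyperplane (u : E n) (d : ℝ) (x y : E n) :
    reflectHyperplane u d x - reflectHyperplane u d y
      = (x - y) - ((2 * ⟪x - y, u⟫) / ‖u‖ ^ 2) • u := by
  simp only [reflectHyperplane, inner_sub_left]
  module

lemma reflectHyperplane_involutive {u : E n} (d : ℝ) (hu : u ≠ 0) :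
    Function.Involutive (reflectHyperplane u d) := by
  intro x
  have hu2 : ‖u‖ ^ 2 ≠ 0 := by positivity
  have hinner : ⟪reflectHyperplane u d x, u⟫ = 2 * d - ⟪x, u⟫ := by
    rw [reflectHyperplane, inner_sub_left, real_inner_smul_left, real_inner_self_eq_norm_sq]
    field_simp
    ring
  rw [reflectHyperplane, hinner, reflectHyperplane, sub_sub, ← add_smul]
  convert sub_zero x
  rw [smul_eq_zero]
  left
  field_simp
  ring

lemma dist_reflectHyperplane {u : E n} (d : ℝ) (hu : u ≠ 0) (x y : E n) :
    dist (reflectHyperplane u d x) (reflectHyperplane u d y) = dist x y := by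
  have hu2 : ‖u‖ ^ 2 ≠ 0 := by positivity
  rw [dist_eq_norm, dist_eq_norm, reflectHyperplane_sub_reflectHyperplane,
    ← sq_eq_sq₀ (norm_nonneg _) (norm_nonneg _), norm_sub_sq_real, real_inner_smul_right,
    norm_smul, mul_pow, Real.norm_eq_abs, sq_abs]
  field_simp
  ring

lemma hypRefl_involutive {u : E n} (d : ℝ) (hu : u ≠ 0) : Function.Involutive (hypRefl u d) := by
  intro z
  cases z with
  | infty => rfl
  | coe x => rw [hypRefl_coe, hypRefl_coe, reflectHyperplane_involutive d hu x]

lemma IsMobius.exists_inverse {F : OnePoint (E n) → OnePoint (E n)} (hF : IsMobius n F) :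
    ∃ G, IsMobius n G ∧ Function.LeftInverse G F ∧ Function.RightInverse G F := by
  induction hF with
  | inv c R hR =>
    have h := sphereInv_involutive c hR.ne'
    exact ⟨_, .inv c R hR, h, h⟩
  | refl u d hu =>
    have h := hypRefl_involutive d hu
    exact ⟨_, .refl u d hu, h, h⟩
  | comp f g _ _ ihf ihg =>
    obtain ⟨f', hf', hf'l, hf'r⟩ := ihf
    obtain ⟨g', hg', hg'l, hg'r⟩ := ihg
    exact ⟨g' ∘ f', .comp _ _ hg' hf', hf'l.comp hg'l, hf'r.comp hg'r⟩

end Generators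

section ChordalScale

variable {n : ℕ}

open Classical in
noncomputable def sphereInvScale (c : E n) (R : ℝ) : OnePoint (E n) → ℝ
  | OnePoint.infty => R / chordalWeight c
  | OnePoint.some x => if x = c then chordalWeight c / R
      else R * chordalWeight x / (dist x c * chordalWeight (inversion c R x))

lemma sphereInvScale_pos (c : E n) {R : ℝ} (hR : 0 < R) (z : OnePoint (E n)) :
    0 < sphereInvScale c R z := by
  have hw := chordalWeight_pos (V := E n)
  cases z with
  | infty => exact div_pos hR (hw c)
  | coe x =>
    by_cases hx : x = c
    · simpa [sphereInvScale, hx] using div_pos (hw c) hR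
    · simpa [sphereInvScale, hx] using
        div_pos (mul_pos hR (hw x)) (mul_pos (dist_pos.2 hx) (hw _))

lemma chordalDist_sphereInv (c : E n) {R : ℝ} (hR : 0 < R) (x y : OnePoint (E n)) :
    chordalDist (sphereInv c R x) (sphereInv c R y)
      = sphereInvScale c R x * sphereInvScale c R y * chordalDist x y := by
  have hw := fun z : E n => (chordalWeight_pos z).ne'
  have hR' := hR.ne'
  rcases x.eq_infty_or_eq_or_exists_ne c with rfl | rfl | ⟨x, hx, rfl⟩ <;>
  rcases y.eq_infty_or_eq_or_exists_ne c with rfl | rfl | ⟨y, hy, rfl⟩ <;>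
  (try have := dist_ne_zero.2 hx) <;> (try have := dist_ne_zero.2 hy) <;>
  simp [sphereInvScale, sphereInv_infty, sphereInv_center, sphereInv_coe, *,
    dist_inversion_inversion, dist_inversion_center, dist_comm c] <;>
  field_simp [hw]

noncomputable def hypReflScale (u : E n) (d : ℝ) : OnePoint (E n) → ℝ
  | OnePoint.infty => 1
  | OnePoint.some x => chordalWeight x / chordalWeight (reflectHyperplane u d x)

lemma hypReflScale_pos (u : E n) (d : ℝ) (z : OnePoint (E n)) : 0 < hypReflScale u d z := by
  cases z with
  | infty => exact one_pos
  | coe x => exact div_pos (chordalWeight_pos x) (chordalWeight_pos _)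

lemma chordalDist_hypRefl {u : E n} (d : ℝ) (hu : u ≠ 0) (x y : OnePoint (E n)) :
    chordalDist (hypRefl u d x) (hypRefl u d y)
      = hypReflScale u d x * hypReflScale u d y * chordalDist x y := by
  have hw := fun z : E n => (chordalWeight_pos z).ne'
  cases x <;> cases y <;>
  simp [hypReflScale, hypRefl_infty, hypRefl_coe, dist_reflectHyperplane d hu] <;>
  field_simp [hw]

lemma IsMobius.exists_chordalDist_scale {F : OnePoint (E n) → OnePoint (E n)}
    (hF : IsMobius n F) : ∃ σ : OnePoint (E n) → ℝ, (∀ z, 0 < σ z) ∧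
      ∀ x y, chordalDist (F x) (F y) = σ x * σ y * chordalDist x y := by
  induction hF with
  | inv c R hR => exact ⟨_, sphereInvScale_pos c hR, chordalDist_sphereInv c hR⟩
  | refl u d hu => exact ⟨_, hypReflScale_pos u d, chordalDist_hypRefl d hu⟩
  | comp f g _ _ ihf ihg =>
    obtain ⟨σf, hσf, hf⟩ := ihf
    obtain ⟨σg, hσg, hg⟩ := ihg
    refine ⟨fun z => σf (g z) * σg z, fun z => mul_pos (hσf _) (hσg _), fun x y => ?_⟩
    simp only [Function.comp_apply, hf, hg]
    ring

lemma IsMobius.exists_dist_scale {F : OnePoint (E n) → OnePoint (E n)} (hF : IsMobius n F) :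
    ∃ ρ : E n → ℝ, IsDistScale F ρ := by
  obtain ⟨σ, hσ, hF⟩ := hF.exists_chordalDist_scale
  have hw := chordalWeight_pos (V := E n)
  refine ⟨fun u => σ u * chordalDist (u : OnePoint (E n)) ∞ / chordalDist (F u) ∞, ?_, ?_⟩
  · intro u u' hu
    simp only [hu, chordalDist_coe_infty]
    exact div_pos (mul_pos (hσ _) (inv_pos.2 (hw u))) (inv_pos.2 (hw u'))
  · intro u v u' v' hu hv
    have h := hF u v
    simp only [hu, hv, chordalDist_coe_coe, chordalDist_coe_infty] at h ⊢
    have := (hw u).ne'; have := (hw v).ne'; have := (hw u').ne'; have := (hw v').ne'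
    field_simp at h ⊢
    linear_combination h

lemma scale_mul_scale_infty_le_sqrt_two {F : OnePoint (E n) → OnePoint (E n)}
    {σ : OnePoint (E n) → ℝ} (hF : ∀ x y, chordalDist (F x) (F y) = σ x * σ y * chordalDist x y)
    {z : E n} (hz : ‖z‖ ≤ 1) : σ z * σ ∞ ≤ √2 := by
  have h := (hF z ∞).symm.trans_le (chordalDist_le_one _ _)
  rw [chordalDist_coe_infty, mul_inv_le_iff₀ (chordalWeight_pos z), one_mul] at h
  exact h.trans (chordalWeight_le_sqrt_two hz)

lemma exists_chordalDist_image_lt {F : OnePoint (E n) → OnePoint (E n)}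
    {σ : OnePoint (E n) → ℝ} (hσ : ∀ z, 0 < σ z)
    (hF : ∀ x y, chordalDist (F x) (F y) = σ x * σ y * chordalDist x y)
    (hball : MapsTo F ((↑) '' ball (0 : E n) 1) ((↑) '' ball (0 : E n) 1))
    {p : E n} (hp : ‖p‖ = 1) {ε : ℝ} (hε : 0 < ε) :
    ∃ w : E n, ‖w‖ < 1 ∧ chordalDist (w : OnePoint (E n)) (F p) < ε := by
  set K := √2 * σ p / σ ∞
  have hK : 0 < K := by have := hσ p; have := hσ ∞; positivity
  set δ := min (1 / 2) (ε / (2 * K))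
  have hδ : 0 < δ := lt_min (by norm_num) (by positivity)
  have hδ1 : δ < 1 := (min_le_left _ _).trans_lt (by norm_num)
  have hKδ : K * δ < ε := by
    calc K * δ ≤ K * (ε / (2 * K)) := mul_le_mul_of_nonneg_left (min_le_right _ _) hK.le
      _ = ε / 2 := by field_simp
      _ < ε := half_lt_self hε
  set z : E n := (1 - δ) • p
  have hzp : dist z p = δ := by
    rw [dist_eq_norm, show z - p = (-δ) • p by module, norm_smul, hp, mul_one, norm_neg,
      Real.norm_of_nonneg hδ.le]
  have hz : ‖z‖ = 1 - δ := by
    rw [norm_smul, hp, mul_one, Real.norm_of_nonneg (by linarith)]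
  obtain ⟨w, hw, hFz⟩ := hball (mem_image_of_mem _ (mem_ball_zero_iff.2 (by linarith)))
  refine ⟨w, mem_ball_zero_iff.1 hw, lt_of_le_of_lt ?_ hKδ⟩
  have hσz : σ z ≤ √2 / σ ∞ :=
    (le_div_iff₀ (hσ ∞)).2 (scale_mul_scale_infty_le_sqrt_two hF (by linarith))
  calc chordalDist (w : OnePoint (E n)) (F p) = σ z * σ p * chordalDist (z : OnePoint (E n)) p := by
        rw [hFz, hF]
    _ ≤ √2 / σ ∞ * σ p * δ :=
        mul_le_mul (mul_le_mul_of_nonneg_right hσz (hσ p).le) (hzp ▸ chordalDist_coe_le_dist z p)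
          (chordalDist_nonneg _ _) (by have := hσ p; have := hσ ∞; positivity)
    _ = K * δ := by ring

lemma IsMobius.mapsTo_sphere {F : OnePoint (E n) → OnePoint (E n)} (hF : IsMobius n F)
    (hFball : F '' ((↑) '' ball (0 : E n) 1) = (↑) '' ball (0 : E n) 1) :
    MapsTo F ((↑) '' sphere (0 : E n) 1) ((↑) '' sphere (0 : E n) 1) := by
  rintro _ ⟨p, hp, rfl⟩
  rw [mem_sphere_zero_iff_norm] at hp
  obtain ⟨σ, hσ, hFσ⟩ := hF.exists_chordalDist_scale
  obtain ⟨q, hq, hq1⟩ := exists_coe_eq_norm_le_of_forall_chordalDist_lt fun ε hε =>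
    exists_chordalDist_image_lt hσ hFσ ((mapsTo_image F _).mono_right hFball.le) hp hε
  refine ⟨q, mem_sphere_zero_iff_norm.2 (hq1.antisymm (not_lt.1 fun hq1 => ?_)), hq.symm⟩
  obtain ⟨_, ⟨z, hz, rfl⟩, hFz⟩ := hFball.symm ▸ mem_image_of_mem _ (mem_ball_zero_iff.2 hq1)
  obtain ⟨G, -, hGF, -⟩ := hF.exists_inverse
  have hzp : z = p := OnePoint.coe_injective (hGF.injective (hFz.trans hq.symm))
  exact (mem_ball_zero_iff.1 (hzp ▸ hz)).ne hp

lemma IsMobius.image_sphere {F : OnePoint (E n) → OnePoint (E n)} (hF : IsMobius n F)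
    (hFball : F '' ((↑) '' ball (0 : E n) 1) = (↑) '' ball (0 : E n) 1) :
    F '' ((↑) '' sphere (0 : E n) 1) = (↑) '' sphere (0 : E n) 1 := by
  obtain ⟨G, hG, hGF, hFG⟩ := hF.exists_inverse
  have hGball : G '' ((↑) '' ball (0 : E n) 1) = (↑) '' ball (0 : E n) 1 := by
    nth_rw 1 [← hFball]
    exact hGF.image_image _
  exact (hF.mapsTo_sphere hFball).image_subset.antisymm fun q hq =>
    ⟨G q, hG.mapsTo_sphere hGball hq, hFG q⟩

end ChordalScale

section NormedSpace

variable {V : Type*} [NormedAddCommGroup V]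

lemma frontier_ball_diff_singleton [NormedSpace ℝ V] [Nontrivial V] {c z : V} {r : ℝ}
    (hz : z ∈ ball c r) : frontier (ball c r \ {z}) = sphere c r ∪ {z} := by
  have hr : r ≠ 0 := (pos_of_mem_ball hz).ne'
  have hcl : closure (ball c r \ {z}) = closedBall c r := by
    refine ((closure_mono sdiff_subset).trans_eq (closure_ball c hr)).antisymm ?_
    rw [← closure_ball c hr]
    exact closure_minimal ((dense_compl_singleton z).open_subset_closure_inter isOpen_ball)
      isClosed_closure
  rw [frontier, hcl, (isOpen_ball.sdiff isClosed_singleton).interior_eq, sdiff_sdiff_right,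
    closedBall_sdiff_ball, inter_singleton_of_mem (ball_subset_closedBall hz)]

lemma exists_norm_eq_one_smul_eq [NormedSpace ℝ V] [Nontrivial V] (a : V) :
    ∃ u : V, ‖u‖ = 1 ∧ ‖a‖ • u = a := by
  rcases eq_or_ne a 0 with rfl | ha
  · obtain ⟨u, hu⟩ := exists_norm_eq V zero_le_one
    exact ⟨u, hu, by simp⟩
  · exact ⟨‖a‖⁻¹ • a, by simp [norm_smul, ha], by simp [smul_smul, ha]⟩

lemma dist_neg_of_norm_eq_one [NormedSpace ℝ V] {u : V} (hu : ‖u‖ = 1) : dist u (-u) = 2 := by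
  rw [dist_eq_norm, sub_neg_eq_add, ← two_smul ℝ, norm_smul, hu]
  norm_num

/-- The Ptolemy inequality for `u, a, v` and the inverse point `a / ‖a‖²` of `a` in the unit
sphere. -/
lemma one_sub_norm_sq_mul_dist_le [InnerProductSpace ℝ V] (a : V) {u v : V} (hu : ‖u‖ = 1)
    (hv : ‖v‖ = 1) : (1 - ‖a‖ ^ 2) * dist u v ≤ 2 * (dist a u * dist a v) := by
  rcases eq_or_ne a 0 with rfl | ha
  · simp only [norm_zero, dist_zero_left, hu, hv]
    linarith [dist_le_norm_add_norm u v]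
  set t := ‖a‖
  have ht : 0 < t := norm_pos_iff.2 ha
  set c : V := (t ^ 2)⁻¹ • a
  have hc : ∀ p : V, ‖p‖ = 1 → dist p c = dist p a / t := by
    intro p hp
    rw [← sq_eq_sq₀ dist_nonneg (by positivity), dist_eq_norm, dist_eq_norm, div_pow,
      norm_sub_sq_real, norm_sub_sq_real, real_inner_smul_right, norm_smul, hp,
      Real.norm_of_nonneg (by positivity)]
    field_simp
    ring
  have hac : (1 - t ^ 2) / t ≤ dist a c := by
    rw [dist_eq_norm, show a - c = (1 - (t ^ 2)⁻¹) • a by module, norm_smul]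
    calc (1 - t ^ 2) / t = (1 - (t ^ 2)⁻¹) * (-t) := by field_simp; ring
      _ ≤ ‖1 - (t ^ 2)⁻¹‖ * t := by
        rw [mul_neg, ← neg_mul]
        exact mul_le_mul_of_nonneg_right (neg_le_abs _) ht.le
  have hP := mul_dist_le_mul_dist_add_mul_dist u a v c
  rw [hc u hu, hc v hv, dist_comm u a, dist_comm v a] at hP
  have := mul_le_mul_of_nonneg_left hac (dist_nonneg (x := u) (y := v))
  calc (1 - t ^ 2) * dist u v = t * (dist u v * ((1 - t ^ 2) / t)) := by field_simp
    _ ≤ t * (dist a u * (dist a v / t) + dist a v * (dist a u / t)) := by gcongr; linarith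
    _ = 2 * (dist a u * dist a v) := by field_simp; ring

end NormedSpace

section Cassinian

variable {n : ℕ}

lemma cassinian_nonneg (D : Set (E n)) (x y : E n) : 0 ≤ cassinian D x y :=
  Real.iSup_nonneg fun _ => Real.iSup_nonneg fun _ =>
    div_nonneg dist_nonneg (mul_nonneg dist_nonneg dist_nonneg)

lemma cassinian_le {D : Set (E n)} {x y : E n} {B : ℝ} (hB : 0 ≤ B)
    (h : ∀ p ∈ frontier D, dist x y / (dist x p * dist p y) ≤ B) : cassinian D x y ≤ B :=
  Real.iSup_le (fun p => Real.iSup_le (h p) hB) hB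

lemma le_cassinian {D : Set (E n)} (hD : IsOpen D) {x y p : E n} (hx : x ∈ D) (hy : y ∈ D)
    (hp : p ∈ frontier D) : dist x y / (dist x p * dist p y) ≤ cassinian D x y := by
  obtain ⟨εx, hεx, hballx⟩ := Metric.isOpen_iff.1 hD x hx
  obtain ⟨εy, hεy, hbally⟩ := Metric.isOpen_iff.1 hD y hy
  have hbdd : BddAbove (range fun q => ⨆ _ : q ∈ frontier D, dist x y / (dist x q * dist q y)) := by
    refine ⟨dist x y / (εx * εy), forall_mem_range.2 fun q => Real.iSup_le (fun hq => ?_)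
      (by positivity)⟩
    have hqD : q ∉ D := (hD.frontier_eq ▸ hq).2
    have hxq : εx ≤ dist x q := not_lt.1 fun h => hqD (hballx (mem_ball'.2 h))
    have hqy : εy ≤ dist q y := not_lt.1 fun h => hqD (hbally (mem_ball.2 h))
    exact div_le_div_of_nonneg_left dist_nonneg (by positivity) (by gcongr)
  exact le_ciSup_of_le hbdd p (ciSup_pos (f := fun _ => _) hp).ge

lemma cassinian_le_mul_of_forall_exists {D D' : Set (E n)} (hD : IsOpen D) {x y x' y' : E n}
    (hx : x ∈ D) (hy : y ∈ D) {K : ℝ} (hK : 0 ≤ K)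
    (h : ∀ q ∈ frontier D', ∃ p ∈ frontier D,
      dist x' y' / (dist x' q * dist q y') ≤ K * (dist x y / (dist x p * dist p y))) :
    cassinian D' x' y' ≤ K * cassinian D x y :=
  cassinian_le (mul_nonneg hK (cassinian_nonneg D x y)) fun q hq => by
    obtain ⟨p, hp, hpq⟩ := h q hq
    exact hpq.trans (mul_le_mul_of_nonneg_left (le_cassinian hD hx hy hp) hK)

lemma cassinian_term_mul_scale_sq {F : OnePoint (E n) → OnePoint (E n)} {ρ : E n → ℝ}
    (hρ : IsDistScale F ρ) {x y p x' y' q : E n} (hx : F x = x') (hy : F y = y')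
    (hp : F p = q) (hxp : x ≠ p) (hpy : p ≠ y) :
    dist x' y' / (dist x' q * dist q y') * ρ p ^ 2 = dist x y / (dist x p * dist p y) := by
  have := (hρ.pos hx).ne'; have := (hρ.pos hy).ne'; have := (hρ.pos hp).ne'
  have := dist_ne_zero.2 hxp; have := dist_ne_zero.2 hpy
  rw [hρ.dist_eq hx hy, hρ.dist_eq hx hp, hρ.dist_eq hp hy]
  field_simp

lemma cassinian_le_mul_of_dist_scale {D D' : Set (E n)} (hD : IsOpen D) (hD' : IsOpen D')
    {F : OnePoint (E n) → OnePoint (E n)} {ρ : E n → ℝ} (hρ : IsDistScale F ρ) {K : ℝ} (hK : 0 < K)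
    (hfront : ∀ p ∈ frontier D, ∃ q ∈ frontier D', F p = q ∧ K⁻¹ ≤ ρ p ^ 2 ∧ ρ p ^ 2 ≤ K)
    (hsurj : ∀ q ∈ frontier D', ∃ p ∈ frontier D, F p = q)
    {x y x' y' : E n} (hx : x ∈ D) (hy : y ∈ D) (hx' : x' ∈ D') (hy' : y' ∈ D')
    (hFx : F x = x') (hFy : F y = y') :
    K⁻¹ * cassinian D x y ≤ cassinian D' x' y' ∧ cassinian D' x' y' ≤ K * cassinian D x y := by
  have hnot {A : Set (E n)} (hA : IsOpen A) {z p : E n} (hz : z ∈ A) (hp : p ∈ frontier A) :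
      z ≠ p := fun h => (hA.frontier_eq ▸ hp).2 (h ▸ hz)
  have hterm {p q : E n} (hp : p ∈ frontier D) (hq : q ∈ frontier D') (hpq : F p = q) :=
    cassinian_term_mul_scale_sq hρ hFx hFy hpq (hnot hD hx hp) (hnot hD hy hp).symm
  constructor
  · rw [inv_mul_le_iff₀ hK]
    refine cassinian_le_mul_of_forall_exists hD' hx' hy' hK.le fun p hp => ?_
    obtain ⟨q, hq, hpq, -, hρK⟩ := hfront p hp
    refine ⟨q, hq, ?_⟩
    rw [← hterm hp hq hpq, mul_comm K]
    exact mul_le_mul_of_nonneg_left hρK (by positivity)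
  · refine cassinian_le_mul_of_forall_exists hD hx hy hK.le fun q hq => ?_
    obtain ⟨p, hp, hpq⟩ := hsurj q hq
    obtain ⟨-, -, -, hKρ, -⟩ := hfront p hp
    refine ⟨p, hp, ?_⟩
    rw [← hterm hp hq hpq]
    set r := dist x' y' / (dist x' q * dist q y')
    have hr : 0 ≤ r := by positivity
    calc r = r * (K * K⁻¹) := by rw [mul_inv_cancel₀ hK.ne', mul_one]
      _ ≤ r * (K * ρ p ^ 2) := by gcongr
      _ = K * (r * ρ p ^ 2) := by ring

end Cassinian

section PuncturedBall

variable {n : ℕ} {F : OnePoint (E n) → OnePoint (E n)} {ρ : E n → ℝ} {a : E n}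

lemma exists_image_eq_of_image_sphere
    (hsphere : F '' ((↑) '' sphere (0 : E n) 1) = (↑) '' sphere (0 : E n) 1) {p : E n}
    (hp : ‖p‖ = 1) : ∃ q : E n, ‖q‖ = 1 ∧ F p = q := by
  obtain ⟨q, hq, hFp⟩ := hsphere ▸ mem_image_of_mem F (mem_image_of_mem _
    (mem_sphere_zero_iff_norm.2 hp))
  exact ⟨q, mem_sphere_zero_iff_norm.1 hq, hFp.symm⟩

lemma exists_preimage_eq_of_image_sphere
    (hsphere : F '' ((↑) '' sphere (0 : E n) 1) = (↑) '' sphere (0 : E n) 1) {q : E n}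
    (hq : ‖q‖ = 1) : ∃ p : E n, ‖p‖ = 1 ∧ F p = q := by
  obtain ⟨_, ⟨p, hp, rfl⟩, hFp⟩ := hsphere.symm ▸ mem_image_of_mem _
    (mem_sphere_zero_iff_norm.2 hq)
  exact ⟨p, mem_sphere_zero_iff_norm.1 hp, hFp⟩

lemma scale_zero_mul_scale_eq_dist (hρ : IsDistScale F ρ) (hF0 : F (0 : E n) = a) {p q : E n}
    (hp : ‖p‖ = 1) (hpq : F p = q) : ρ 0 * ρ p = dist a q := by
  simpa [hp] using (hρ.dist_eq hF0 hpq).symm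

lemma scale_zero_sq_le [Nontrivial (E n)] (hρ : IsDistScale F ρ)
    (hsphere : F '' ((↑) '' sphere (0 : E n) 1) = (↑) '' sphere (0 : E n) 1)
    (hF0 : F (0 : E n) = a) (ha : ‖a‖ ≤ 1) : ρ 0 ^ 2 ≤ 1 - ‖a‖ ^ 2 := by
  obtain ⟨u, hu, hau⟩ := exists_norm_eq_one_smul_eq a
  obtain ⟨p₁, hp₁, hFp₁⟩ := exists_preimage_eq_of_image_sphere hsphere hu
  obtain ⟨p₂, hp₂, hFp₂⟩ := exists_preimage_eq_of_image_sphere hsphere ((norm_neg u).trans hu)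
  have h₁ : ρ 0 * ρ p₁ = 1 - ‖a‖ := by
    rw [scale_zero_mul_scale_eq_dist hρ hF0 hp₁ hFp₁, dist_eq_norm]
    nth_rw 1 [← hau]
    rw [show ‖a‖ • u - u = (‖a‖ - 1) • u by module, norm_smul, hu, mul_one,
      Real.norm_of_nonpos (by linarith), neg_sub]
  have h₂ : ρ 0 * ρ p₂ = 1 + ‖a‖ := by
    rw [scale_zero_mul_scale_eq_dist hρ hF0 hp₂ hFp₂, dist_eq_norm]
    nth_rw 1 [← hau]
    rw [show ‖a‖ • u - -u = (‖a‖ + 1) • u by module, norm_smul, hu, mul_one,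
      Real.norm_of_nonneg (by positivity), add_comm]
  have h₁₂ : 2 = ρ p₁ * ρ p₂ * dist p₁ p₂ := by
    rw [← hρ.dist_eq hFp₁ hFp₂, dist_neg_of_norm_eq_one hu]
  have hp₁₂ : dist p₁ p₂ ≤ 2 := by linarith [dist_le_norm_add_norm p₁ p₂]
  have hρ₁ := hρ.pos hFp₁
  have hρ₂ := hρ.pos hFp₂
  have hprod : 1 ≤ ρ p₁ * ρ p₂ := by nlinarith [mul_pos hρ₁ hρ₂]
  nlinarith [sq_nonneg (ρ 0)]

lemma one_sub_norm_sq_le_scale_zero_sq [Nontrivial (E n)] (hρ : IsDistScale F ρ)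
    (hsphere : F '' ((↑) '' sphere (0 : E n) 1) = (↑) '' sphere (0 : E n) 1)
    (hF0 : F (0 : E n) = a) : 1 - ‖a‖ ^ 2 ≤ ρ 0 ^ 2 := by
  obtain ⟨e, he⟩ := exists_norm_eq (E n) zero_le_one
  obtain ⟨q₁, hq₁, hFq₁⟩ := exists_image_eq_of_image_sphere hsphere he
  obtain ⟨q₂, hq₂, hFq₂⟩ := exists_image_eq_of_image_sphere hsphere ((norm_neg e).trans he)
  have hP := one_sub_norm_sq_mul_dist_le a hq₁ hq₂
  rw [hρ.dist_eq hFq₁ hFq₂, dist_neg_of_norm_eq_one he,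
    ← scale_zero_mul_scale_eq_dist hρ hF0 he hFq₁,
    ← scale_zero_mul_scale_eq_dist hρ hF0 ((norm_neg e).trans he) hFq₂] at hP
  have := mul_pos (hρ.pos hFq₁) (hρ.pos hFq₂)
  nlinarith

lemma scale_zero_sq [Nontrivial (E n)] (hρ : IsDistScale F ρ)
    (hsphere : F '' ((↑) '' sphere (0 : E n) 1) = (↑) '' sphere (0 : E n) 1)
    (hF0 : F (0 : E n) = a) (ha : ‖a‖ ≤ 1) : ρ 0 ^ 2 = 1 - ‖a‖ ^ 2 :=
  (scale_zero_sq_le hρ hsphere hF0 ha).antisymm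
    (one_sub_norm_sq_le_scale_zero_sq hρ hsphere hF0)

lemma inv_le_and_le_of_mul_one_sub_sq_eq_sq {t d r : ℝ} (ht : t < 1) (hd₁ : 1 - t ≤ d)
    (hd₂ : d ≤ 1 + t) (hr : r * (1 - t ^ 2) = d ^ 2) :
    ((1 + t) / (1 - t))⁻¹ ≤ r ∧ r ≤ (1 + t) / (1 - t) := by
  have ht₀ : 0 < 1 + t := by linarith
  have ht₁ : 0 < 1 - t := by linarith
  rw [inv_div, div_le_iff₀ ht₀, le_div_iff₀ ht₁]
  constructor <;> nlinarith

lemma exists_image_mem_frontier_punctured_ball [Nontrivial (E n)] (hρ : IsDistScale F ρ)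
    (hsphere : F '' ((↑) '' sphere (0 : E n) 1) = (↑) '' sphere (0 : E n) 1)
    (hF0 : F (0 : E n) = a) (ha : ‖a‖ < 1) :
    ∀ p ∈ frontier (ball (0 : E n) 1 \ {0}), ∃ q ∈ frontier (ball (0 : E n) 1 \ {a}),
      F p = q ∧ ((1 + ‖a‖) / (1 - ‖a‖))⁻¹ ≤ ρ p ^ 2 ∧ ρ p ^ 2 ≤ (1 + ‖a‖) / (1 - ‖a‖) := by
  have hρ₀ := scale_zero_sq hρ hsphere hF0 ha.le
  rw [frontier_ball_diff_singleton (mem_ball_self one_pos),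
    frontier_ball_diff_singleton (mem_ball_zero_iff.2 ha)]
  rintro p (hp | rfl)
  · rw [mem_sphere_zero_iff_norm] at hp
    obtain ⟨q, hq, hpq⟩ := exists_image_eq_of_image_sphere hsphere hp
    refine ⟨q, .inl (mem_sphere_zero_iff_norm.2 hq), hpq,
      inv_le_and_le_of_mul_one_sub_sq_eq_sq (d := dist a q) ha ?_ ?_ ?_⟩
    · linarith [norm_sub_norm_le q a, dist_eq_norm q a, dist_comm q a]
    · linarith [dist_le_norm_add_norm a q]
    · rw [← hρ₀, ← scale_zero_mul_scale_eq_dist hρ hF0 hp hpq]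
      ring
  · refine ⟨a, .inr rfl, hF0,
      inv_le_and_le_of_mul_one_sub_sq_eq_sq (d := 1 - ‖a‖ ^ 2) ha ?_ ?_ (by rw [hρ₀]; ring)⟩
    all_goals nlinarith [norm_nonneg a]

lemma exists_mem_frontier_punctured_ball_image_eq [Nontrivial (E n)]
    (hsphere : F '' ((↑) '' sphere (0 : E n) 1) = (↑) '' sphere (0 : E n) 1)
    (hF0 : F (0 : E n) = a) (ha : ‖a‖ < 1) :
    ∀ q ∈ frontier (ball (0 : E n) 1 \ {a}), ∃ p ∈ frontier (ball (0 : E n) 1 \ {0}), F p = q := by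
  rw [frontier_ball_diff_singleton (mem_ball_self one_pos),
    frontier_ball_diff_singleton (mem_ball_zero_iff.2 ha)]
  rintro q (hq | rfl)
  · obtain ⟨p, hp, hpq⟩ := exists_preimage_eq_of_image_sphere hsphere
      (mem_sphere_zero_iff_norm.1 hq)
    exact ⟨p, .inl (mem_sphere_zero_iff_norm.2 hp), hpq⟩
  · exact ⟨0, .inr rfl, hF0⟩

end PuncturedBall

/-- **Theorem (distortion of the Cassinian metric of a punctured ball under Möbius maps).**
Let `a ∈ 𝔹ⁿ` and let `f : 𝔹ⁿ∖{0} → 𝔹ⁿ∖{a}` be the restriction of a Möbius transformation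
`F` of `ℝⁿ ∪ {∞}` mapping the unit ball onto itself, with `f(0) = a` and
`f(𝔹ⁿ∖{0}) = 𝔹ⁿ∖{a}`.  Then for all `x, y ∈ 𝔹ⁿ∖{0}`,
`((1-|a|)/(1+|a|)) c_{𝔹ⁿ∖{0}}(x,y) ≤ c_{𝔹ⁿ∖{a}}(f x, f y) ≤ ((1+|a|)/(1-|a|)) c_{𝔹ⁿ∖{0}}(x,y)`. -/
theorem cassinian_mobius_punctured_ball (n : ℕ) (hn : 2 ≤ n)
    (a : E n) (ha : a ∈ ball (0 : E n) 1)
    (F : OnePoint (E n) → OnePoint (E n)) (hF : IsMobius n F)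
    (hFball : F '' ((↑) '' ball (0 : E n) 1) = (↑) '' ball (0 : E n) 1)
    (hF0 : F ((0 : E n) : OnePoint (E n)) = (a : OnePoint (E n)))
    (f : E n → E n)
    (hf : ∀ z ∈ ball (0 : E n) 1 \ {0}, F (z : OnePoint (E n)) = (f z : OnePoint (E n)))
    (hfim : f '' (ball (0 : E n) 1 \ {0}) = ball (0 : E n) 1 \ {a})
    (x y : E n) (hx : x ∈ ball (0 : E n) 1 \ {0}) (hy : y ∈ ball (0 : E n) 1 \ {0}) :
    (1 - ‖a‖) / (1 + ‖a‖) * cassinian (ball (0 : E n) 1 \ {0}) x y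
        ≤ cassinian (ball (0 : E n) 1 \ {a}) (f x) (f y) ∧
      cassinian (ball (0 : E n) 1 \ {a}) (f x) (f y)
        ≤ (1 + ‖a‖) / (1 - ‖a‖) * cassinian (ball (0 : E n) 1 \ {0}) x y := by
  have : Nonempty (Fin n) := ⟨⟨0, by omega⟩⟩
  have ha' : ‖a‖ < 1 := mem_ball_zero_iff.1 ha
  have hD (z : E n) : IsOpen (ball (0 : E n) 1 \ {z}) := isOpen_ball.sdiff isClosed_singleton
  obtain ⟨ρ, hρ⟩ := hF.exists_dist_scale
  have hsphere := hF.image_sphere hFball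
  have hK : 0 < (1 + ‖a‖) / (1 - ‖a‖) := div_pos (by positivity) (by linarith)
  rw [← inv_div]
  exact cassinian_le_mul_of_dist_scale (hD 0) (hD a) hρ hK
    (exists_image_mem_frontier_punctured_ball hρ hsphere hF0 ha')
    (exists_mem_frontier_punctured_ball_image_eq hsphere hF0 ha') hx hy
    (hfim ▸ mem_image_of_mem f hx) (hfim ▸ mem_image_of_mem f hy) (hf x hx) (hf y hy)
end

section
/- Let n ≥ 2, α ∈ (0,1), a = α e₁ ∈ 𝔹ⁿ, a* = a/|a|² and r = √(1−|a|²)/|a|, and let σ(x) = a* + (r/|x−a*|)² (x−a*) be the inversion in the sphere S^{n−1}(a*, r). Then for 0 < s < t < 1, with x = −t e₁ and y = −s e₁ one has σ(x) = ((α+t)/(1+αt)) e₁, σ(y) = ((α+s)/(1+αs)) e₁, and |σ(x)−σ(y)| / ((1−|σ(x)|)(1−|σ(y)|)) = ((1+α)/(1−α)) · (t−s)/((1−t)(1−s)). -/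
open Metric Set

lemma inversion_calc (n : ℕ) (e₁ : E n) (he : ‖e₁‖ = 1)
    (α u : ℝ) (hα0 : 0 < α) (hα1 : α < 1) (hu0 : 0 < u) :
    (α⁻¹ • e₁) + (((Real.sqrt (1 - α ^ 2) / α) / ‖(-u) • e₁ - α⁻¹ • e₁‖) ^ 2)
        • ((-u) • e₁ - α⁻¹ • e₁)
      = ((α + u) / (1 + α * u)) • e₁ := by
  have hd : (-u) • e₁ - α⁻¹ • e₁ = (-u - α⁻¹) • e₁ := by rw [sub_smul]
  have hαinv : 0 < α⁻¹ := by positivity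
  have hnorm : ‖(-u - α⁻¹) • e₁‖ = u + α⁻¹ := by
    rw [norm_smul, he, mul_one, Real.norm_eq_abs, abs_of_neg (by linarith)]
    ring
  rw [hd, hnorm, smul_smul, ← add_smul]
  congr 1
  have hsq : Real.sqrt (1 - α ^ 2) ^ 2 = 1 - α ^ 2 :=
    Real.sq_sqrt (by nlinarith)
  have h1 : u + α⁻¹ ≠ 0 := by positivity
  have h2 : (1 : ℝ) + α * u ≠ 0 := by positivity
  have h3 : α ≠ 0 := ne_of_gt hα0
  field_simp
  nlinarith [hsq, sq_nonneg α, sq_nonneg u]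

/-- **Sharpness computation for the Möbius distortion of the Cassinian metric.**
Let `α ∈ (0,1)`, `a = α e₁ ∈ 𝔹ⁿ`, `a* = a/|a|²`, `r = √(1-|a|²)/|a|`, and let
`σ(x) = a* + (r/|x-a*|)² (x-a*)` be the inversion in the sphere `S^{n-1}(a*, r)`.
Then for `0 < s < t < 1`, with `x = -t e₁` and `y = -s e₁`:
`σ(x) = ((α+t)/(1+αt)) e₁`, `σ(y) = ((α+s)/(1+αs)) e₁`, and
`|σ(x)-σ(y)| / ((1-|σ(x)|)(1-|σ(y)|)) = ((1+α)/(1-α)) · (t-s)/((1-t)(1-s))`. -/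
theorem cassinian_mobius_sharpness (n : ℕ) (hn : 2 ≤ n)
    (α : ℝ) (hα0 : 0 < α) (hα1 : α < 1)
    (s t : ℝ) (hs : 0 < s) (hst : s < t) (ht : t < 1)
    (e₁ a astar : E n) (r : ℝ) (σ : E n → E n) (x y : E n)
    (he₁ : e₁ = EuclideanSpace.single (⟨0, by omega⟩ : Fin n) (1 : ℝ))
    (ha : a = α • e₁)
    (hastar : astar = (‖a‖ ^ 2)⁻¹ • a)
    (hr : r = Real.sqrt (1 - ‖a‖ ^ 2) / ‖a‖)
    (hσ : σ = fun z : E n => astar + ((r / ‖z - astar‖) ^ 2) • (z - astar))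
    (hx : x = (-t) • e₁) (hy : y = (-s) • e₁) :
    σ x = ((α + t) / (1 + α * t)) • e₁ ∧
      σ y = ((α + s) / (1 + α * s)) • e₁ ∧
      ‖σ x - σ y‖ / ((1 - ‖σ x‖) * (1 - ‖σ y‖))
        = ((1 + α) / (1 - α)) * ((t - s) / ((1 - t) * (1 - s))) := by
  have he : ‖e₁‖ = 1 := by
    rw [he₁, EuclideanSpace.norm_single, norm_one]
  have hna : ‖a‖ = α := by
    rw [ha, norm_smul, he, mul_one, Real.norm_eq_abs, abs_of_pos hα0]
  have hα3 : α ≠ 0 := ne_of_gt hα0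
  have hastar' : astar = α⁻¹ • e₁ := by
    rw [hastar, hna, ha, smul_smul]
    congr 1
    field_simp
  have hr' : r = Real.sqrt (1 - α ^ 2) / α := by rw [hr, hna]
  have hσx : σ x = ((α + t) / (1 + α * t)) • e₁ := by
    rw [hσ, hx, hastar', hr']
    exact inversion_calc n e₁ he α t hα0 hα1 (hs.trans hst)
  have hσy : σ y = ((α + s) / (1 + α * s)) • e₁ := by
    rw [hσ, hy, hastar', hr']
    exact inversion_calc n e₁ he α s hα0 hα1 hs
  refine ⟨hσx, hσy, ?_⟩
  have ht0 : 0 < t := hs.trans hst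
  have hdt : (0:ℝ) < 1 + α * t := by positivity
  have hds : (0:ℝ) < 1 + α * s := by positivity
  have hβt : 0 < (α + t) / (1 + α * t) := by positivity
  have hβs : 0 < (α + s) / (1 + α * s) := by positivity
  have hnx : ‖σ x‖ = (α + t) / (1 + α * t) := by
    rw [hσx, norm_smul, he, mul_one, Real.norm_eq_abs, abs_of_pos hβt]
  have hny : ‖σ y‖ = (α + s) / (1 + α * s) := by
    rw [hσy, norm_smul, he, mul_one, Real.norm_eq_abs, abs_of_pos hβs]
  have hdiffpos : 0 < (α + t) / (1 + α * t) - (α + s) / (1 + α * s) := by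
    rw [div_sub_div _ _ (ne_of_gt hdt) (ne_of_gt hds)]
    apply div_pos _ (by positivity)
    nlinarith [mul_pos (sub_pos.2 hst)
      (mul_pos (by linarith : (0:ℝ) < 1 - α) (by linarith : (0:ℝ) < 1 + α))]
  have hnxy : ‖σ x - σ y‖ = (α + t) / (1 + α * t) - (α + s) / (1 + α * s) := by
    rw [hσx, hσy, ← sub_smul, norm_smul, he, mul_one, Real.norm_eq_abs,
      abs_of_pos hdiffpos]
  rw [hnxy, hnx, hny]
  have hA : 1 - (α + t) / (1 + α * t) = (1 - α) * (1 - t) / (1 + α * t) := by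
    field_simp; ring
  have hB : 1 - (α + s) / (1 + α * s) = (1 - α) * (1 - s) / (1 + α * s) := by
    field_simp; ring
  have hN : (α + t) / (1 + α * t) - (α + s) / (1 + α * s)
      = (t - s) * (1 - α ^ 2) / ((1 + α * t) * (1 + α * s)) := by
    field_simp; ring
  rw [hA, hB, hN]
  have h1α : (1:ℝ) - α ≠ 0 := by linarith
  have h1t : (1:ℝ) - t ≠ 0 := by linarith
  have h1s : (1:ℝ) - s ≠ 0 := by linarith
  field_simp
  ring
end

section
/- Let D ⊊ ℝⁿ (n ≥ 2) be a domain, x ∈ D and R > 0. Then the Cassinian ball of D satisfies B_{c_D}(x,R) = D ∩ ⋂_{z ∈ ∂D} B_{c_{ℝⁿ∖{z}}}(x,R), where the intersection is over all finite boundary points z ∈ ∂D. -/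
open Metric Set

lemma cassinian_key {n : ℕ} (S : Set (E n)) (hS : IsClosed S)
    (x y : E n) (hx : x ∉ S) (hy : y ∉ S) (R : ℝ) (hR : 0 < R) :
    (⨆ p ∈ S, dist x y / (dist x p * dist p y)) < R ↔
      ∀ z ∈ S, dist x y / (dist x z * dist z y) < R := by
  set f : E n → ℝ := fun p => dist x y / (dist x p * dist p y) with hf
  set g : E n → ℝ := fun p => ⨆ _ : p ∈ S, f p with hgdef
  have hfnn : ∀ p, 0 ≤ f p := fun p =>
    div_nonneg dist_nonneg (mul_nonneg dist_nonneg dist_nonneg)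
  have hgS : ∀ p (hp : p ∈ S), g p = f p := fun p hp => ciSup_pos hp
  have hgnS : ∀ p, p ∉ S → g p = 0 := by
    intro p hp
    haveI : IsEmpty (p ∈ S) := ⟨hp⟩
    exact Real.iSup_of_isEmpty _
  have hfxp : ∀ p ∈ S, 0 < dist x p := fun p hp =>
    dist_pos.mpr (fun h => hx (h ▸ hp))
  have hfyp : ∀ p ∈ S, 0 < dist p y := fun p hp =>
    dist_pos.mpr (fun h => hy (h ▸ hp))
  rcases S.eq_empty_or_nonempty with hSe | hSne
  · subst hSe
    constructor
    · intro _ z hz; exact absurd hz (notMem_empty z)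
    · intro _
      have : ∀ p, g p ≤ 0 := fun p => le_of_eq (hgnS p (notMem_empty p))
      exact lt_of_le_of_lt (Real.iSup_le this le_rfl) hR
  · have hax : 0 < infDist x S := (hS.notMem_iff_infDist_pos hSne).mp hx
    have hay : 0 < infDist y S := (hS.notMem_iff_infDist_pos hSne).mp hy
    have hbd : ∀ p ∈ S, f p ≤ dist x y / (infDist x S * infDist y S) := by
      intro p hp
      apply div_le_div_of_nonneg_left dist_nonneg (mul_pos hax hay)
      have h1 : infDist x S ≤ dist x p := infDist_le_dist_of_mem hp
      have h2 : infDist y S ≤ dist p y := by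
        rw [dist_comm]; exact infDist_le_dist_of_mem hp
      exact mul_le_mul h1 h2 hay.le dist_nonneg
    have hbdd : BddAbove (Set.range g) := by
      refine ⟨max (dist x y / (infDist x S * infDist y S)) 0, ?_⟩
      rintro _ ⟨p, rfl⟩
      by_cases hp : p ∈ S
      · rw [hgS p hp]; exact (hbd p hp).trans (le_max_left _ _)
      · rw [hgnS p hp]; exact le_max_right _ _
    constructor
    · intro h z hz
      calc f z = g z := (hgS z hz).symm
        _ ≤ ⨆ p, g p := le_ciSup hbdd z
        _ < R := h
    · intro h
      -- find c < R with 0 ≤ c bounding all f p on S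
      obtain ⟨c, hcR, hc0, hcb⟩ : ∃ c, c < R ∧ 0 ≤ c ∧ ∀ p ∈ S, f p ≤ c := by
        rcases eq_or_lt_of_le (dist_nonneg : (0:ℝ) ≤ dist x y) with hxy | hxy
        · refine ⟨0, hR, le_rfl, fun p hp => ?_⟩
          simp [hf, ← hxy]
        · set a := infDist x S with ha
          set T := dist x y + 2 * dist x y / (a * R) with hT
          set K := S ∩ closedBall x T with hK
          have hout : ∀ p ∈ S, p ∉ closedBall x T → f p ≤ R / 2 := by
            intro p hp hpB
            have hdxp : T < dist x p := by
              rw [mem_closedBall, not_le, dist_comm] at hpB; exact hpB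
            have h1 : 2 * dist x y / (a * R) ≤ dist p y := by
              have htri : dist x p ≤ dist x y + dist p y := by
                have := dist_triangle x y p
                rwa [dist_comm y p] at this
              have hTe : dist x y + 2 * dist x y / (a * R) < dist x p := hT ▸ hdxp
              linarith
            have h2 : a ≤ dist x p := infDist_le_dist_of_mem hp
            have hden : 2 * dist x y / R ≤ dist x p * dist p y := by
              have heq : 2 * dist x y / R = a * (2 * dist x y / (a * R)) := by
                field_simp
              rw [heq]
              exact mul_le_mul h2 h1 (by positivity) (hax.le.trans h2)
            have hpos : (0:ℝ) < 2 * dist x y / R := by positivity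
            calc f p ≤ dist x y / (2 * dist x y / R) :=
                  div_le_div_of_nonneg_left dist_nonneg hpos hden
              _ = R / 2 := by field_simp
          have hKcomp : IsCompact K := (isCompact_closedBall x T).inter_left hS
          rcases K.eq_empty_or_nonempty with hKe | hKne
          · refine ⟨R / 2, by linarith, by positivity, fun p hp => ?_⟩
            apply hout p hp
            intro hb
            have : p ∈ K := ⟨hp, hb⟩
            rw [hKe] at this
            exact notMem_empty p this
          · have hfc : ContinuousOn f K := by
              apply ContinuousOn.div continuousOn_const
              · exact ((continuous_const.dist continuous_id).mul
                  (continuous_id.dist continuous_const)).continuousOn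
              · intro p hp
                exact ne_of_gt (mul_pos (hfxp p hp.1) (hfyp p hp.1))
            obtain ⟨p₀, hp₀, hmax⟩ := hKcomp.exists_isMaxOn hKne hfc
            refine ⟨max (f p₀) (R / 2), max_lt (h p₀ hp₀.1) (by linarith),
              le_max_of_le_right (by positivity), fun p hp => ?_⟩
            by_cases hpB : p ∈ closedBall x T
            · exact le_max_of_le_left (hmax ⟨hp, hpB⟩)
            · exact le_max_of_le_right (hout p hp hpB)
      have : (⨆ p, g p) ≤ c := by
        apply Real.iSup_le _ hc0
        intro p
        by_cases hp : p ∈ S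
        · rw [hgS p hp]; exact hcb p hp
        · rw [hgnS p hp]; exact hc0
      exact lt_of_le_of_lt this hcR

/-- **Decomposition of Cassinian balls.**
For a domain `D ⊊ ℝⁿ`, `x ∈ D` and `R > 0`, the Cassinian ball of `D` satisfies
`B_{c_D}(x,R) = D ∩ ⋂_{z ∈ ∂D} B_{c_{ℝⁿ∖{z}}}(x,R)`,
where `c_{ℝⁿ∖{z}}(x,y) = |x-y|/(|x-z||y-z|)`. -/
theorem cassinianBall_eq_iInter (n : ℕ) (hn : 2 ≤ n)
    (D : Set (E n)) (hD : IsOpen D) (hDconn : IsConnected D) (hDproper : D ≠ univ)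
    (x : E n) (hx : x ∈ D) (R : ℝ) (hR : 0 < R) :
    {y ∈ D | cassinian D x y < R}
      = D ∩ ⋂ z ∈ frontier D, {y : E n | y ≠ z ∧ dist x y / (dist x z * dist z y) < R} := by
  have hDF : ∀ w ∈ D, w ∉ frontier D := by
    intro w hw hwF
    rw [hD.frontier_eq] at hwF
    exact hwF.2 hw
  ext y
  simp only [mem_setOf_eq, mem_inter_iff, mem_iInter]
  constructor
  · rintro ⟨hyD, hlt⟩
    refine ⟨hyD, fun z hz => ⟨fun h => hDF y hyD (h ▸ hz), ?_⟩⟩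
    exact (cassinian_key (frontier D) isClosed_frontier x y (hDF x hx) (hDF y hyD) R hR).mp
      hlt z hz
  · rintro ⟨hyD, hall⟩
    refine ⟨hyD, ?_⟩
    exact (cassinian_key (frontier D) isClosed_frontier x y (hDF x hx) (hDF y hyD) R hR).mpr
      (fun z hz => (hall z hz).2)
end

section
/- For every r > 0 there exists a point x in the upper half-plane ℍ² such that the Cassinian ball B_{c_{ℍ²}}(x, r) is not convex; in fact, for x = (0, 1/r) the points y₁ = (0, 1/(2r)) and y₂ = (2/r, 1/r) satisfy c_{ℍ²}(x,y₁) = c_{ℍ²}(x,y₂) = r while the midpoint y₃ = (1/r, 3/(4r)) satisfies c_{ℍ²}(x, y₃) > r. -/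
open Metric Set

/-- The Cassinian metric of a planar domain `D ⊆ ℂ`:
`c_D(x,y) = sup_{p ∈ ∂D} |x-y| / (|x-p| |p-y|)`. -/
noncomputable def cassinianC (D : Set ℂ) (x y : ℂ) : ℝ :=
  ⨆ p ∈ frontier D, dist x y / (dist x p * dist p y)

/-!
Dilations `z ↦ a • z` map a domain onto its image and multiply its Cassinian metric by `‖a‖⁻¹`;
since they preserve `ℍ²`, everything reduces to `r = 1` and `x = i`. Along the vertical through
`i` the supremum is attained at the boundary point `0`, giving `c(i, b i) = |1 - b| / b`, and
along the horizontal it is attained at the midpoint, giving `c(i, b + i) = 4b / (b² + 4)` for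
`0 ≤ b ≤ 2`. Hence `i/2` and `2 + i` lie on the unit sphere while `(13/25) i` and `49/25 + i` lie
in the unit ball; the boundary point `2/3` shows that `c(i, ·) > 1` at both midpoints
`1 + 3i/4` and `49/50 + (19/25) i`.
-/

open Complex Pointwise

local notation "ℍ²" => Set.ofPred fun z : ℂ => 0 < Complex.im z

def cassinianBall (D : Set ℂ) (x : ℂ) (r : ℝ) : Set ℂ := {y ∈ D | cassinianC D x y < r}

theorem frontier_smul₀ {G₀ α : Type*} [GroupWithZero G₀] [MulAction G₀ α] [TopologicalSpace α]
    [ContinuousConstSMul G₀ α] {c : G₀} (hc : c ≠ 0) (s : Set α) :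
    frontier (c • s) = c • frontier s :=
  ((Homeomorph.smulOfNeZero c hc).image_frontier s).symm

theorem cassinianC_smul {a : ℂ} (ha : a ≠ 0) (D : Set ℂ) (x y : ℂ) :
    cassinianC (a • D) (a * x) (a * y) = ‖a‖⁻¹ * cassinianC D x y := by
  rw [cassinianC, cassinianC, frontier_smul₀ ha, Real.mul_iSup_of_nonneg (by positivity),
    ← (mulLeft_bijective₀ a ha).surjective.iSup_comp]
  refine iSup_congr fun q => ?_
  rw [Real.mul_iSup_of_nonneg (by positivity)]
  refine iSup_congr_Prop (smul_mem_smul_set_iff₀ ha _ q) fun _ => ?_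
  have hna : ‖a‖ ≠ 0 := norm_ne_zero_iff.mpr ha
  simp only [dist_eq, ← mul_sub, norm_mul]
  field_simp

theorem ofReal_smul_upperHalfPlane {a : ℝ} (ha : 0 < a) : (a : ℂ) • ℍ² = ℍ² := by
  ext z
  rw [mem_smul_set_iff_inv_smul_mem₀ (ofReal_ne_zero.mpr ha.ne')]
  simp [← ofReal_inv, smul_eq_mul, mul_pos_iff_of_pos_left (inv_pos.mpr ha)]

theorem cassinianC_upperHalfPlane_div {a : ℝ} (ha : 0 < a) (x y : ℂ) :
    cassinianC ℍ² (x / a) (y / a) = a * cassinianC ℍ² x y := by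
  have h := cassinianC_smul (a := ((a⁻¹ : ℝ) : ℂ)) (by simp [ha.ne']) ℍ² x y
  rw [ofReal_smul_upperHalfPlane (inv_pos.mpr ha)] at h
  simpa [div_eq_inv_mul, abs_of_pos ha] using h

theorem cassinianBall_upperHalfPlane_div {a : ℝ} (ha : 0 < a) (x : ℂ) (ρ : ℝ) :
    cassinianBall ℍ² (x / a) (a * ρ) = a⁻¹ • cassinianBall ℍ² x ρ := by
  ext y
  have hy := cassinianC_upperHalfPlane_div ha x (a • y)
  rw [real_smul, mul_div_cancel_left₀ y (ofReal_ne_zero.mpr ha.ne')] at hy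
  rw [mem_smul_set_iff_inv_smul_mem₀ (inv_ne_zero ha.ne'), inv_inv]
  simp [cassinianBall, hy, mul_lt_mul_iff_right₀ ha, ha]

theorem frontier_upperHalfPlane : frontier ℍ² = {z | z.im = 0} := by
  refine (frontier_preimage_im (Ioi 0)).trans ?_
  rw [frontier_Ioi]
  rfl

theorem Complex.sq_dist_eq_re_im (z w : ℂ) :
    dist z w ^ 2 = (z.re - w.re) ^ 2 + (z.im - w.im) ^ 2 := by
  rw [dist_eq_re_im, Real.sq_sqrt (by positivity)]

theorem dist_ofReal_pos_of_im_ne_zero {z : ℂ} (hz : z.im ≠ 0) (t : ℝ) : 0 < dist z t :=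
  dist_pos.mpr fun e => hz (by simp [e])

theorem cassinianC_upperHalfPlane_le {x y : ℂ} {v : ℝ} (hv : 0 ≤ v)
    (h : ∀ t : ℝ, dist x y ^ 2 ≤ v ^ 2 * (dist x t ^ 2 * dist (t : ℂ) y ^ 2)) :
    cassinianC ℍ² x y ≤ v := by
  rw [cassinianC, frontier_upperHalfPlane]
  refine Real.iSup_le (fun p => Real.iSup_le (fun hp => ?_) hv) hv
  have hp : ((p.re : ℝ) : ℂ) = p := ext rfl hp.symm
  refine div_le_of_le_mul₀ (by positivity) hv ?_
  rw [← pow_le_pow_iff_left₀ dist_nonneg (by positivity) two_ne_zero, ← hp]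
  linarith [h p.re]

theorem div_le_cassinianC_upperHalfPlane {x y : ℂ} (hx : x.im ≠ 0) (hy : y.im ≠ 0) (t : ℝ) :
    dist x y / (dist x t * dist (t : ℂ) y) ≤ cassinianC ℍ² x y := by
  rw [cassinianC, frontier_upperHalfPlane]
  refine le_ciSup₂ (f := fun p (_ : p ∈ {z : ℂ | z.im = 0}) => dist x y / (dist x p * dist p y))
    ⟨dist x y / (|x.im| * |y.im|), ?_⟩ (t : ℂ) (ofReal_im t)
  simp only [mem_upperBounds, mem_iUnion, mem_range]
  rintro _ ⟨p, hp, rfl⟩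
  have hxp : |x.im| ≤ dist x p := by
    simpa [hp.out, dist_eq] using abs_im_le_norm (x - p)
  have hpy : |y.im| ≤ dist p y := by
    simpa [hp.out, dist_eq, abs_sub_comm] using abs_im_le_norm (p - y)
  gcongr

theorem le_cassinianC_upperHalfPlane {x y : ℂ} (hx : x.im ≠ 0) (hy : y.im ≠ 0) {v : ℝ}
    (hv : 0 ≤ v) (t : ℝ) (h : v ^ 2 * (dist x t ^ 2 * dist (t : ℂ) y ^ 2) ≤ dist x y ^ 2) :
    v ≤ cassinianC ℍ² x y := by
  refine le_trans ?_ (div_le_cassinianC_upperHalfPlane hx hy t)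
  have := mul_pos (dist_ofReal_pos_of_im_ne_zero hx t)
    (dist_comm y t ▸ dist_ofReal_pos_of_im_ne_zero hy t)
  rw [le_div_iff₀ this, ← pow_le_pow_iff_left₀ (by positivity) dist_nonneg two_ne_zero]
  linarith

theorem lt_cassinianC_upperHalfPlane {x y : ℂ} (hx : x.im ≠ 0) (hy : y.im ≠ 0) {v : ℝ}
    (hv : 0 ≤ v) (t : ℝ) (h : v ^ 2 * (dist x t ^ 2 * dist (t : ℂ) y ^ 2) < dist x y ^ 2) :
    v < cassinianC ℍ² x y := by
  refine lt_of_lt_of_le ?_ (div_le_cassinianC_upperHalfPlane hx hy t)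
  have := mul_pos (dist_ofReal_pos_of_im_ne_zero hx t)
    (dist_comm y t ▸ dist_ofReal_pos_of_im_ne_zero hy t)
  rw [lt_div_iff₀ this, ← pow_lt_pow_iff_left₀ (by positivity) dist_nonneg two_ne_zero]
  linarith

theorem cassinianC_I_ofReal_mul_I {b : ℝ} (hb : 0 < b) :
    cassinianC ℍ² I (b * I) = |1 - b| / b := by
  have hv : (|1 - b| / b) ^ 2 = (1 - b) ^ 2 / b ^ 2 := by rw [div_pow, sq_abs]
  refine le_antisymm (cassinianC_upperHalfPlane_le (by positivity) fun t => ?_)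
    (le_cassinianC_upperHalfPlane (by simp) (by simp [hb.ne']) (by positivity) 0 ?_)
  · have : (1 - b) ^ 2 ≤ (1 - b) ^ 2 / b ^ 2 * ((t ^ 2 + 1) * (t ^ 2 + b ^ 2)) :=
      calc (1 - b) ^ 2 = (1 - b) ^ 2 / b ^ 2 * b ^ 2 := by field_simp
        _ ≤ _ := by gcongr; nlinarith [sq_nonneg t, pow_two_nonneg (t ^ 2)]
    simpa [sq_dist_eq_re_im, hv] using this
  · simpa [sq_dist_eq_re_im, hv] using
      (div_mul_cancel₀ ((1 - b) ^ 2) (by positivity : b ^ 2 ≠ 0)).le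

theorem cassinianC_I_ofReal_add_I {b : ℝ} (hb₀ : 0 ≤ b) (hb₂ : b ≤ 2) :
    cassinianC ℍ² I (b + I) = 4 * b / (b ^ 2 + 4) := by
  have hv : (4 * b / (b ^ 2 + 4)) ^ 2 = b ^ 2 / (b ^ 2 / 4 + 1) ^ 2 := by field_simp
  refine le_antisymm (cassinianC_upperHalfPlane_le (by positivity) fun t => ?_)
    (le_cassinianC_upperHalfPlane (by simp) (by simp) (by positivity) (b / 2) ?_)
  · have : b ^ 2 ≤ b ^ 2 / (b ^ 2 / 4 + 1) ^ 2 * ((t ^ 2 + 1) * ((t - b) ^ 2 + 1)) :=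
      calc b ^ 2 = b ^ 2 / (b ^ 2 / 4 + 1) ^ 2 * (b ^ 2 / 4 + 1) ^ 2 := by field_simp
        _ ≤ _ := by
          gcongr
          -- the difference is `u⁴ + (4 - b²) u² / 2` with `u = t - b / 2`
          nlinarith [pow_two_nonneg ((t - b / 2) ^ 2),
            mul_nonneg (sq_nonneg (t - b / 2)) (by nlinarith : (0:ℝ) ≤ 4 - b ^ 2)]
    simpa [sq_dist_eq_re_im, hv] using this
  · have : b ^ 2 / (b ^ 2 / 4 + 1) ^ 2 * (((b / 2) ^ 2 + 1) * ((b / 2 - b) ^ 2 + 1)) = b ^ 2 := by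
      field_simp; ring
    simpa [sq_dist_eq_re_im, hv] using this.le

theorem one_lt_cassinianC_I {y : ℂ} (hy : 0 < y.im) (t : ℝ)
    (h : (t ^ 2 + 1) * ((t - y.re) ^ 2 + y.im ^ 2) < y.re ^ 2 + (1 - y.im) ^ 2) :
    1 < cassinianC ℍ² I y := by
  refine lt_cassinianC_upperHalfPlane (by simp) hy.ne' zero_le_one t ?_
  simpa [sq_dist_eq_re_im] using h

theorem not_convex_cassinianBall_I_one : ¬ Convex ℝ (cassinianBall ℍ² I 1) := by
  intro hconv
  have h₁ : ((13 / 25 : ℝ) : ℂ) * I ∈ cassinianBall ℍ² I 1 := by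
    refine ⟨by norm_num, ?_⟩
    rw [cassinianC_I_ofReal_mul_I (by norm_num)]
    norm_num [abs_of_pos]
  have h₂ : ((49 / 25 : ℝ) : ℂ) + I ∈ cassinianBall ℍ² I 1 := by
    refine ⟨by simp, ?_⟩
    rw [cassinianC_I_ofReal_add_I (by norm_num) (by norm_num)]
    norm_num
  have hm := hconv h₁ h₂ (by norm_num : (0 : ℝ) ≤ 1 / 2) (by norm_num : (0 : ℝ) ≤ 1 / 2)
    (by norm_num)
  exact hm.2.not_gt (one_lt_cassinianC_I hm.1 (2 / 3) (by norm_num))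

/-- **Cassinian balls of the half-plane need not be convex.**
For every `r > 0` there is `x ∈ ℍ²` with `B_{c_{ℍ²}}(x,r)` not convex; in fact,
for `x = i/r` the points `y₁ = i/(2r)` and `y₂ = (2+i)/r` lie on the Cassinian sphere
`c_{ℍ²}(x,·) = r`, while their midpoint `y₃ = 1/r + 3i/(4r)` satisfies `c_{ℍ²}(x,y₃) > r`. -/
theorem cassinianBall_halfPlane_not_convex (r : ℝ) (hr : 0 < r) :
    let H : Set ℂ := {z : ℂ | 0 < z.im}
    let x : ℂ := Complex.I / r
    let y₁ : ℂ := Complex.I / (2 * r)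
    let y₂ : ℂ := (2 + Complex.I) / r
    let y₃ : ℂ := (y₁ + y₂) / 2
    cassinianC H x y₁ = r ∧ cassinianC H x y₂ = r ∧ r < cassinianC H x y₃ ∧
      ¬ Convex ℝ {y ∈ H | cassinianC H x y < r} := by
  intro H x y₁ y₂ y₃
  have hx : ∀ z, cassinianC H x (z / r) = r * cassinianC H I z :=
    cassinianC_upperHalfPlane_div hr I
  have e₁ : y₁ = ((1 / 2 : ℝ) * I) / r := by simp only [y₁]; push_cast; ring
  have e₂ : y₂ = ((2 : ℝ) + I) / r := by simp only [y₂]; push_cast; ring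
  have e₃ : y₃ = (1 + 3 / 4 * I) / r := by simp only [y₃, y₁, y₂]; ring
  refine ⟨?_, ?_, ?_, ?_⟩
  · rw [e₁, hx, cassinianC_I_ofReal_mul_I (by norm_num)]
    norm_num
  · rw [e₂, hx, cassinianC_I_ofReal_add_I (by norm_num) le_rfl]
    norm_num
  · rw [e₃, hx]
    exact lt_mul_of_one_lt_right hr (one_lt_cassinianC_I (by norm_num) (2 / 3) (by norm_num))
  · have hball := cassinianBall_upperHalfPlane_div hr I 1
    rw [mul_one] at hball
    change ¬ Convex ℝ (cassinianBall H x r)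
    rw [hball]
    exact fun h => not_convex_cassinianBall_I_one (by simpa [smul_smul, hr.ne'] using h.smul r)
end

section
/- Let D ⊊ ℝⁿ (n ≥ 2) be a domain, x ∈ D, and t > 0 with t·δ_D(x) < 1. Then Bⁿ(x, r) ⊂ B_c(x, t) ⊂ Bⁿ(x, R), where r = t δ_D(x)² / (1 + t δ_D(x)) and R = t δ_D(x)² / (1 − t δ_D(x)). -/
open Metric Set

/-- **Inclusion of Cassinian balls between Euclidean balls.**
Let `D ⊊ ℝⁿ` be a domain, `x ∈ D`, `t > 0` with `t δ_D(x) < 1`.  Then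
`Bⁿ(x,r) ⊆ B_c(x,t) ⊆ Bⁿ(x,R)` with `r = t δ_D(x)²/(1+t δ_D(x))` and
`R = t δ_D(x)²/(1-t δ_D(x))`. -/
theorem euclideanBall_subset_cassinianBall_subset (n : ℕ) (hn : 2 ≤ n)
    (D : Set (E n)) (hD : IsOpen D) (hDconn : IsConnected D) (hDproper : D ≠ univ)
    (x : E n) (hx : x ∈ D) (t : ℝ) (ht : 0 < t)
    (ht1 : t * infDist x (frontier D) < 1) :
    ball x (t * infDist x (frontier D) ^ 2 / (1 + t * infDist x (frontier D)))
        ⊆ {y ∈ D | cassinian D x y < t} ∧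
      {y ∈ D | cassinian D x y < t}
        ⊆ ball x (t * infDist x (frontier D) ^ 2 / (1 - t * infDist x (frontier D))) := by
  set δ := infDist x (frontier D) with hδdef
  have hfr : (frontier D).Nonempty :=
    nonempty_frontier_iff.mpr ⟨⟨x, hx⟩, hDproper⟩
  have hxfr : x ∉ frontier D := fun h =>
    absurd (hD.inter_frontier_eq ▸ (⟨hx, h⟩ : x ∈ D ∩ frontier D)) (notMem_empty x)
  have hδpos : 0 < δ := (isClosed_frontier.notMem_iff_infDist_pos hfr).mp hxfr
  -- ball x δ ⊆ D
  have hball : ball x δ ⊆ D := by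
    obtain ⟨p, hp, hpd⟩ := exists_mem_frontier_infDist_compl_eq_dist hx hDproper
    have hle : δ ≤ infDist x Dᶜ := by
      rw [hpd]; exact infDist_le_dist_of_mem hp
    intro y hy
    by_contra hyD
    have : infDist x Dᶜ ≤ dist x y := infDist_le_dist_of_mem hyD
    rw [mem_ball, dist_comm] at hy
    linarith
  have htδ : t * δ < 1 := ht1
  constructor
  · intro y hy
    rw [mem_ball, dist_comm] at hy
    set d := dist x y with hddef
    have hd0 : 0 ≤ d := dist_nonneg
    have hrδ : t * δ ^ 2 / (1 + t * δ) < δ := by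
      rw [div_lt_iff₀ (by nlinarith)]
      nlinarith
    have hdδ : d < δ := lt_trans hy hrδ
    have hyD : y ∈ D := hball (by rw [mem_ball, dist_comm]; exact hdδ)
    refine ⟨hyD, ?_⟩
    have hbound : cassinian D x y ≤ d / (δ * (δ - d)) := by
      have hpos : 0 < δ * (δ - d) := mul_pos hδpos (by linarith)
      have hB0 : 0 ≤ d / (δ * (δ - d)) := div_nonneg hd0 hpos.le
      refine Real.iSup_le (fun p => Real.iSup_le (fun hp => ?_) hB0) hB0
      have hxp : δ ≤ dist x p := infDist_le_dist_of_mem hp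
      have hpy : δ - d ≤ dist p y := by
        have htri := dist_triangle x y p
        rw [dist_comm y p] at htri
        linarith
      have hmul : δ * (δ - d) ≤ dist x p * dist p y :=
        mul_le_mul hxp hpy (by linarith) (le_trans hδpos.le hxp)
      exact div_le_div_of_nonneg_left hd0 hpos hmul
    have hlt : d / (δ * (δ - d)) < t := by
      rw [div_lt_iff₀ (mul_pos hδpos (by linarith))]
      rw [lt_div_iff₀ (by nlinarith)] at hy
      nlinarith
    exact lt_of_le_of_lt hbound hlt
  · rintro y ⟨hyD, hyc⟩
    rw [mem_ball, dist_comm]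
    set d := dist x y with hddef
    have hd0 : 0 ≤ d := dist_nonneg
    have hyfr : y ∉ frontier D := fun h =>
      absurd (hD.inter_frontier_eq ▸ (⟨hyD, h⟩ : y ∈ D ∩ frontier D)) (notMem_empty y)
    have hδy : 0 < infDist y (frontier D) :=
      (isClosed_frontier.notMem_iff_infDist_pos hfr).mp hyfr
    set δy := infDist y (frontier D) with hδydef
    obtain ⟨p, hp, hpd⟩ := isClosed_frontier.exists_infDist_eq_dist hfr x
    -- the single term at p is ≤ cassinian
    have hBdd : BddAbove (range fun q => ⨆ _ : q ∈ frontier D, d / (dist x q * dist q y)) := by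
      refine ⟨d / (δ * δy), ?_⟩
      rintro _ ⟨q, rfl⟩
      have hB0 : 0 ≤ d / (δ * δy) := div_nonneg hd0 (mul_pos hδpos hδy).le
      refine Real.iSup_le (fun hq => ?_) hB0
      have h1 : δ ≤ dist x q := infDist_le_dist_of_mem hq
      have h2 : δy ≤ dist q y := dist_comm q y ▸ infDist_le_dist_of_mem hq
      have hmul : δ * δy ≤ dist x q * dist q y :=
        mul_le_mul h1 h2 hδy.le (le_trans hδpos.le h1)
      exact div_le_div_of_nonneg_left hd0 (mul_pos hδpos hδy) hmul
    have hterm : d / (dist x p * dist p y) ≤ cassinian D x y := by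
      have h := le_ciSup hBdd p
      rwa [ciSup_pos hp] at h
    have hpy : dist p y ≤ δ + d := by
      have htri := dist_triangle p x y
      rw [dist_comm p x] at htri
      rw [← hpd] at htri
      linarith
    have hxppos : 0 < dist x p := hpd ▸ hδpos
    have hpypos : 0 < dist p y :=
      lt_of_lt_of_le hδy (dist_comm p y ▸ infDist_le_dist_of_mem hp)
    have hlt : d / (dist x p * dist p y) < t := lt_of_le_of_lt hterm hyc
    rw [div_lt_iff₀ (mul_pos hxppos hpypos)] at hlt
    rw [lt_div_iff₀ (by linarith)]
    rw [← hpd] at hlt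
    nlinarith [mul_le_mul_of_nonneg_left hpy (by positivity : (0:ℝ) ≤ t * δ)]
end

section
/- Let n ≥ 2, a ∈ ℝⁿ, D = ℝⁿ∖{a}, x ∈ D, and t > 0 with t|x−a| < 1. Set u = (x−a)/|x−a|, y₁ = x − (t|x−a|²/(1 + t|x−a|)) u and y₂ = x + (t|x−a|²/(1 − t|x−a|)) u. Then c_D(x, y₁) = t and c_D(x, y₂) = t; consequently the radii r = t δ_D(x)²/(1 + t δ_D(x)) and R = t δ_D(x)²/(1 − t δ_D(x)) in the inclusion Bⁿ(x,r) ⊂ B_c(x,t) ⊂ Bⁿ(x,R) are best possible. -/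
/-!
On the ray from `a` through `x`, writing `x - a = d • u` with `‖u‖ = 1`, the point `x + s • u`
has Cassinian distance `|s| / (d * |d + s|)` from `x`. The two given offsets `s` are the
solutions of `|s| = t * d * |d + s|` of either sign, and `|s|` is the Euclidean distance.
-/

open Metric Set

section Ray

variable {V : Type*} [NormedAddCommGroup V] [NormedSpace ℝ V] {a x u : V}

lemma norm_eq_one_of_eq_inv_norm_smul (hx : x ≠ a) (hu : u = ‖x - a‖⁻¹ • (x - a)) : ‖u‖ = 1 :=
  hu ▸ norm_smul_inv_norm (sub_ne_zero.2 hx)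

lemma dist_add_smul_of_eq_inv_norm_smul (hx : x ≠ a) (hu : u = ‖x - a‖⁻¹ • (x - a)) (s : ℝ) :
    dist (x + s • u) a = |‖x - a‖ + s| := by
  have hray : x + s • u - a = (‖x - a‖ + s) • u := by
    rw [hu, smul_smul, smul_smul, add_mul, mul_inv_cancel₀ (norm_sub_pos_iff.2 hx).ne', add_smul,
      one_smul]
    abel
  rw [dist_eq_norm, hray, norm_smul, norm_eq_one_of_eq_inv_norm_smul hx hu, mul_one,
    Real.norm_eq_abs]

lemma cassinian_add_smul_of_eq_inv_norm_smul (hx : x ≠ a) (hu : u = ‖x - a‖⁻¹ • (x - a))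
    (s : ℝ) :
    dist x (x + s • u) / (dist x a * dist (x + s • u) a) = |s| / (‖x - a‖ * |‖x - a‖ + s|) := by
  rw [dist_self_add_right, norm_smul, norm_eq_one_of_eq_inv_norm_smul hx hu, mul_one,
    Real.norm_eq_abs, dist_add_smul_of_eq_inv_norm_smul hx hu, dist_eq_norm]

end Ray

section Radii

variable {d t : ℝ}

lemma cassinian_ratio_inner_radius (hd : 0 < d) (ht : 0 < t) :
    |-(t * d ^ 2 / (1 + t * d))| / (d * |d + -(t * d ^ 2 / (1 + t * d))|) = t := by
  have hk : 0 < 1 + t * d := by positivity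
  have hsum : d + -(t * d ^ 2 / (1 + t * d)) = d / (1 + t * d) := by field_simp; ring
  rw [hsum, abs_neg, abs_of_pos (by positivity), abs_of_pos (by positivity)]
  field_simp

lemma cassinian_ratio_outer_radius (hd : 0 < d) (ht : 0 < t) (htd : t * d < 1) :
    |t * d ^ 2 / (1 - t * d)| / (d * |d + t * d ^ 2 / (1 - t * d)|) = t := by
  have hk : 0 < 1 - t * d := by linarith
  have hsum : d + t * d ^ 2 / (1 - t * d) = d / (1 - t * d) := by
    rw [eq_div_iff hk.ne', add_mul, div_mul_cancel₀ _ hk.ne']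
    ring
  rw [hsum, abs_of_pos (by positivity), abs_of_pos (by positivity)]
  field_simp

end Radii

theorem cassinian_euclidean_inclusion_sharp_general (n : ℕ)
    (a x : E n) (hx : x ≠ a) (t : ℝ) (ht : 0 < t) (ht1 : t * ‖x - a‖ < 1)
    (u y₁ y₂ : E n)
    (hu : u = ‖x - a‖⁻¹ • (x - a))
    (hy₁ : y₁ = x - (t * ‖x - a‖ ^ 2 / (1 + t * ‖x - a‖)) • u)
    (hy₂ : y₂ = x + (t * ‖x - a‖ ^ 2 / (1 - t * ‖x - a‖)) • u) :
    dist x y₁ / (dist x a * dist y₁ a) = t ∧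
      dist x y₂ / (dist x a * dist y₂ a) = t ∧
      dist x y₁ = t * ‖x - a‖ ^ 2 / (1 + t * ‖x - a‖) ∧
      dist x y₂ = t * ‖x - a‖ ^ 2 / (1 - t * ‖x - a‖) := by
  have hd : 0 < ‖x - a‖ := norm_sub_pos_iff.2 hx
  have hu1 : ‖u‖ = 1 := norm_eq_one_of_eq_inv_norm_smul hx hu
  have hk : 0 < 1 - t * ‖x - a‖ := by linarith
  rw [sub_eq_add_neg, ← neg_smul] at hy₁
  subst hy₁ hy₂
  refine ⟨?_, ?_, ?_, ?_⟩
  · rw [cassinian_add_smul_of_eq_inv_norm_smul hx hu, cassinian_ratio_inner_radius hd ht]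
  · rw [cassinian_add_smul_of_eq_inv_norm_smul hx hu, cassinian_ratio_outer_radius hd ht ht1]
  · rw [dist_self_add_right, norm_smul, hu1, mul_one, Real.norm_eq_abs, abs_neg,
      abs_of_pos (by positivity)]
  · rw [dist_self_add_right, norm_smul, hu1, mul_one, Real.norm_eq_abs,
      abs_of_pos (by positivity)]

/-- **Sharpness of the Euclidean-ball inclusions for Cassinian balls of punctured space.**
Let `D = ℝⁿ∖{a}`, `x ∈ D`, `t > 0` with `t|x-a| < 1`, `u = (x-a)/|x-a|`,
`y₁ = x - (t|x-a|²/(1+t|x-a|)) u` and `y₂ = x + (t|x-a|²/(1-t|x-a|)) u`.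
Then `c_D(x,y₁) = t = c_D(x,y₂)`, while `|x-y₁| = t δ_D(x)²/(1+t δ_D(x))` and
`|x-y₂| = t δ_D(x)²/(1-t δ_D(x))` (here `δ_D(x) = |x-a|`); hence the radii
in the inclusion `Bⁿ(x,r) ⊆ B_c(x,t) ⊆ Bⁿ(x,R)` are best possible. -/
theorem cassinian_euclidean_inclusion_sharp (n : ℕ) (hn : 2 ≤ n)
    (a x : E n) (hx : x ≠ a) (t : ℝ) (ht : 0 < t) (ht1 : t * ‖x - a‖ < 1)
    (u y₁ y₂ : E n)
    (hu : u = ‖x - a‖⁻¹ • (x - a))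
    (hy₁ : y₁ = x - (t * ‖x - a‖ ^ 2 / (1 + t * ‖x - a‖)) • u)
    (hy₂ : y₂ = x + (t * ‖x - a‖ ^ 2 / (1 - t * ‖x - a‖)) • u) :
    dist x y₁ / (dist x a * dist y₁ a) = t ∧
      dist x y₂ / (dist x a * dist y₂ a) = t ∧
      dist x y₁ = t * ‖x - a‖ ^ 2 / (1 + t * ‖x - a‖) ∧
      dist x y₂ = t * ‖x - a‖ ^ 2 / (1 - t * ‖x - a‖) :=
  cassinian_euclidean_inclusion_sharp_general n a x hx t ht ht1 u y₁ y₂ hu hy₁ hy₂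
end

section
/- Let D ⊊ ℝⁿ (n ≥ 2) be a domain, x ∈ D, and t > 0 with t·δ_D(x) < 1. Then B_j(x, r) ⊂ B_c(x, t) ⊂ B_j(x, R), where r = log(1 + t δ_D(x)/(1 + t δ_D(x))) and R = t δ_D(x)/(1 − t δ_D(x)). -/
open Metric Set

/-- The distance ratio metric of a domain `D`:
`j_D(x,y) = log(1 + |x-y| / min(δ_D(x), δ_D(y)))`, where `δ_D(z) = dist(z, ∂D)`. -/
noncomputable def jdist {n : ℕ} (D : Set (E n)) (x y : E n) : ℝ :=
  Real.log (1 + dist x y / min (infDist x (frontier D)) (infDist y (frontier D)))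

/-- **Inclusion of Cassinian balls between distance-ratio metric balls.**
Let `D ⊊ ℝⁿ` be a domain, `x ∈ D`, `t > 0` with `t δ_D(x) < 1`.  Then
`B_j(x,r) ⊆ B_c(x,t) ⊆ B_j(x,R)` with `r = log(1 + t δ_D(x)/(1+t δ_D(x)))` and
`R = t δ_D(x)/(1-t δ_D(x))`. -/
theorem jBall_subset_cassinianBall_subset (n : ℕ) (hn : 2 ≤ n)
    (D : Set (E n)) (hD : IsOpen D) (hDconn : IsConnected D) (hDproper : D ≠ univ)
    (x : E n) (hx : x ∈ D) (t : ℝ) (ht : 0 < t)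
    (ht1 : t * infDist x (frontier D) < 1) :
    {y ∈ D | jdist D x y
          < Real.log (1 + t * infDist x (frontier D) / (1 + t * infDist x (frontier D)))}
        ⊆ {y ∈ D | cassinian D x y < t} ∧
      {y ∈ D | cassinian D x y < t}
        ⊆ {y ∈ D | jdist D x y
          < t * infDist x (frontier D) / (1 - t * infDist x (frontier D))} := by
  have hFclosed : IsClosed (frontier D) := isClosed_frontier
  have hFne : (frontier D).Nonempty := by
    by_contra h
    rw [not_nonempty_iff_eq_empty] at h
    rcases isClopen_iff.mp (isClopen_iff_frontier_eq_empty.mpr h) with h1 | h1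
    · exact absurd (h1 ▸ hx) (notMem_empty x)
    · exact hDproper h1
  have hdpos : ∀ z ∈ D, 0 < infDist z (frontier D) := by
    intro z hz
    rw [← hFclosed.notMem_iff_infDist_pos hFne]
    intro hzF
    rw [hD.frontier_eq] at hzF
    exact hzF.2 hz
  have hd : 0 < infDist x (frontier D) := hdpos x hx
  set d := infDist x (frontier D) with hd_def
  have htd : 0 < t * d := mul_pos ht hd
  constructor
  · rintro y ⟨hy, hjy⟩
    refine ⟨hy, ?_⟩
    have hdy : 0 < infDist y (frontier D) := hdpos y hy
    set m := min d (infDist y (frontier D)) with hm_def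
    have hmpos : 0 < m := lt_min hd hdy
    have hu : dist x y / m < t * d / (1 + t * d) := by
      have h1 : (0:ℝ) < 1 + dist x y / m := by positivity
      have h2 : (0:ℝ) < 1 + t * d / (1 + t * d) := by positivity
      have := (Real.log_lt_log_iff h1 h2).mp hjy
      linarith
    have hxy : dist x y < t * d / (1 + t * d) * m := (div_lt_iff₀ hmpos).mp hu
    have hB : t * d / (1 + t * d) / d < t := by
      have : t * d / (1 + t * d) / d = t / (1 + t * d) := by
        field_simp
      rw [this]
      exact div_lt_self ht (by linarith)
    refine lt_of_le_of_lt ?_ hB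
    have hBnn : (0:ℝ) ≤ t * d / (1 + t * d) / d := by positivity
    refine Real.iSup_le (fun p => Real.iSup_le (fun hp => ?_) hBnn) hBnn
    have h1 : d ≤ dist x p := infDist_le_dist_of_mem hp
    have h2 : m ≤ dist p y := by
      refine le_trans (min_le_right _ _) ?_
      rw [dist_comm]
      exact infDist_le_dist_of_mem hp
    calc dist x y / (dist x p * dist p y)
        ≤ t * d / (1 + t * d) * m / (d * m) := by
          apply div_le_div₀ (by positivity) hxy.le (by positivity)
          exact mul_le_mul h1 h2 hmpos.le (le_trans hd.le h1)
      _ = t * d / (1 + t * d) / d := by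
          rw [mul_comm d m, ← div_div]
          rw [mul_div_assoc, div_self hmpos.ne', mul_one]
  · rintro y ⟨hy, hcy⟩
    refine ⟨hy, ?_⟩
    have hdy : 0 < infDist y (frontier D) := hdpos y hy
    set m := min d (infDist y (frontier D)) with hm_def
    have hmpos : 0 < m := lt_min hd hdy
    have hmd : m ≤ d := min_le_left _ _
    have htd1 : 0 < 1 - t * d := by linarith
    have hR : 0 < t * d / (1 - t * d) := div_pos htd htd1
    by_cases hxy : x = y
    · subst hxy
      simp only [jdist, dist_self, zero_div, add_zero, Real.log_one]
      exact hR
    have hdxy : 0 < dist x y := dist_pos.mpr hxy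
    obtain ⟨p, hpF, hprod⟩ :
        ∃ p ∈ frontier D, dist x p * dist p y ≤ m * (m + dist x y) := by
      rcases le_total d (infDist y (frontier D)) with hle | hle
      · obtain ⟨p, hpF, hpd⟩ := hFclosed.exists_infDist_eq_dist hFne x
        refine ⟨p, hpF, ?_⟩
        have hm' : dist x p = m := by rw [hm_def, min_eq_left hle, hd_def, hpd]
        have h2 : dist p y ≤ m + dist x y := by
          calc dist p y ≤ dist p x + dist x y := dist_triangle _ _ _
            _ = m + dist x y := by rw [dist_comm p x, hm']
        rw [hm']
        exact mul_le_mul_of_nonneg_left h2 hmpos.le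
      · obtain ⟨p, hpF, hpd⟩ := hFclosed.exists_infDist_eq_dist hFne y
        refine ⟨p, hpF, ?_⟩
        have hm' : dist p y = m := by
          rw [hm_def, min_eq_right hle, hpd, dist_comm]
        have h2 : dist x p ≤ m + dist x y := by
          calc dist x p ≤ dist x y + dist y p := dist_triangle _ _ _
            _ = m + dist x y := by rw [dist_comm y p, hm']; ring
        rw [hm', mul_comm]
        exact mul_le_mul_of_nonneg_left h2 hmpos.le
    have hxp : 0 < dist x p := lt_of_lt_of_le hd (infDist_le_dist_of_mem hpF)
    have hpy : 0 < dist p y := by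
      have := infDist_le_dist_of_mem (x := y) hpF
      rw [dist_comm] at this
      exact lt_of_lt_of_le hdy this
    have hfp : dist x y / (dist x p * dist p y) ≤ cassinian D x y := by
      have hCnn : (0:ℝ) ≤ dist x y / (d * infDist y (frontier D)) := by positivity
      have hbdd : BddAbove (range fun q =>
          ⨆ _ : q ∈ frontier D, dist x y / (dist x q * dist q y)) := by
        refine ⟨dist x y / (d * infDist y (frontier D)), ?_⟩
        rintro _ ⟨q, rfl⟩
        refine Real.iSup_le (fun hq => ?_) hCnn
        have h1 : d ≤ dist x q := infDist_le_dist_of_mem hq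
        have h2 : infDist y (frontier D) ≤ dist q y := by
          rw [dist_comm]; exact infDist_le_dist_of_mem hq
        exact div_le_div₀ dist_nonneg le_rfl (by positivity)
          (mul_le_mul h1 h2 hdy.le (hd.le.trans h1))
      calc dist x y / (dist x p * dist p y)
          = ⨆ _ : p ∈ frontier D, dist x y / (dist x p * dist p y) := (ciSup_pos (f := fun _ : p ∈ frontier D => dist x y / (dist x p * dist p y)) hpF).symm
        _ ≤ cassinian D x y := le_ciSup hbdd p
    have hfpt : dist x y / (dist x p * dist p y) < t := lt_of_le_of_lt hfp hcy
    have h5 : dist x y < t * (m * (m + dist x y)) := by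
      calc dist x y < t * (dist x p * dist p y) :=
            (div_lt_iff₀ (mul_pos hxp hpy)).mp hfpt
        _ ≤ t * (m * (m + dist x y)) := mul_le_mul_of_nonneg_left hprod ht.le
    have hu : dist x y / m < t * d / (1 - t * d) := by
      rw [div_lt_div_iff₀ hmpos htd1]
      nlinarith [mul_nonneg (mul_nonneg ht.le (sub_nonneg.2 hmd))
        (by positivity : (0:ℝ) ≤ dist x y + m)]
    have hlog := Real.log_le_sub_one_of_pos
      (show (0:ℝ) < 1 + dist x y / m by positivity)
    show Real.log (1 + dist x y / m) < t * d / (1 - t * d)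
    linarith
end

section
/- Let n ≥ 2, a ∈ ℝⁿ, D = ℝⁿ∖{a}, x ∈ D, and t > 0 with t|x−a| < 1. Then B_j(x, r) ⊂ B_c(x, t) ⊂ B_j(x, R), where r = log(1 + t|x−a|) and R = log(1/(1 − t|x−a|)). -/
section Cassinian

variable {X : Type*} [MetricSpace X] {a x y : X} {t : ℝ}

theorem dist_div_mul_dist_lt_of_dist_div_min_lt (hx : x ≠ a) (hy : y ≠ a) (ht : 0 < t)
    (h : dist x y / min (dist x a) (dist y a) < t * dist x a) :
    dist x y / (dist x a * dist y a) < t := by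
  have hxa := dist_pos.2 hx
  have hya := dist_pos.2 hy
  rw [div_lt_iff₀ (lt_min hxa hya)] at h
  rw [div_lt_iff₀ (mul_pos hxa hya)]
  calc dist x y < t * dist x a * min (dist x a) (dist y a) := h
    _ ≤ t * dist x a * dist y a := by gcongr; exact min_le_right _ _
    _ = t * (dist x a * dist y a) := mul_assoc _ _ _

theorem dist_div_min_lt_of_dist_div_mul_dist_lt (hx : x ≠ a) (hy : y ≠ a) (ht : 0 < t)
    (ht1 : t * dist x a < 1) (h : dist x y / (dist x a * dist y a) < t) :
    dist x y / min (dist x a) (dist y a) < t * dist x a / (1 - t * dist x a) := by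
  have hxa := dist_pos.2 hx
  have hya := dist_pos.2 hy
  have htd : 0 < t * dist x a := mul_pos ht hxa
  rw [div_lt_iff₀ (mul_pos hxa hya)] at h
  rw [div_lt_div_iff₀ (lt_min hxa hya) (sub_pos.2 ht1)]
  rcases min_cases (dist x a) (dist y a) with ⟨hmin, -⟩ | ⟨hmin, -⟩ <;> rw [hmin]
  · have htri : dist y a ≤ dist x y + dist x a := dist_triangle_left y a x
    nlinarith [mul_le_mul_of_nonneg_left htri htd.le]
  · nlinarith [mul_nonneg htd.le (dist_nonneg : 0 ≤ dist x y)]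

end Cassinian

theorem jBall_subset_cassinianBall_subset_punctured_general (n : ℕ)
    (a x : E n) (hx : x ≠ a) (t : ℝ) (ht : 0 < t) (ht1 : t * dist x a < 1) :
    {y : E n | y ≠ a ∧
          Real.log (1 + dist x y / min (dist x a) (dist y a))
            < Real.log (1 + t * dist x a)}
        ⊆ {y : E n | y ≠ a ∧ dist x y / (dist x a * dist y a) < t} ∧
      {y : E n | y ≠ a ∧ dist x y / (dist x a * dist y a) < t}
        ⊆ {y : E n | y ≠ a ∧
          Real.log (1 + dist x y / min (dist x a) (dist y a))
            < Real.log (1 / (1 - t * dist x a))} := by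
  have htd : 0 < t * dist x a := mul_pos ht (dist_pos.2 hx)
  refine ⟨fun y ⟨hy, hj⟩ => ⟨hy, ?_⟩, fun y ⟨hy, hc⟩ => ⟨hy, ?_⟩⟩
  · rw [Real.log_lt_log_iff (by positivity) (by positivity), add_lt_add_iff_left] at hj
    exact dist_div_mul_dist_lt_of_dist_div_min_lt hx hy ht hj
  · have hc' := dist_div_min_lt_of_dist_div_mul_dist_lt hx hy ht ht1 hc
    rw [← add_lt_add_iff_left (1 : ℝ), one_add_div (sub_pos.2 ht1).ne', sub_add_cancel] at hc'
    exact Real.log_lt_log (by positivity) hc'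

/-- **Inclusion of Cassinian balls between `j`-metric balls in punctured space.**
Let `D = ℝⁿ∖{a}`, `x ∈ D`, `t > 0` with `t|x-a| < 1`.  Then
`B_j(x,r) ⊆ B_c(x,t) ⊆ B_j(x,R)` with `r = log(1 + t|x-a|)` and
`R = log(1/(1 - t|x-a|))`; here `c_D(x,y) = |x-y|/(|x-a||y-a|)` and
`j_D(x,y) = log(1 + |x-y|/min(|x-a|, |y-a|))`. -/
theorem jBall_subset_cassinianBall_subset_punctured (n : ℕ) (hn : 2 ≤ n)
    (a x : E n) (hx : x ≠ a) (t : ℝ) (ht : 0 < t) (ht1 : t * dist x a < 1) :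
    {y : E n | y ≠ a ∧
          Real.log (1 + dist x y / min (dist x a) (dist y a))
            < Real.log (1 + t * dist x a)}
        ⊆ {y : E n | y ≠ a ∧ dist x y / (dist x a * dist y a) < t} ∧
      {y : E n | y ≠ a ∧ dist x y / (dist x a * dist y a) < t}
        ⊆ {y : E n | y ≠ a ∧
          Real.log (1 + dist x y / min (dist x a) (dist y a))
            < Real.log (1 / (1 - t * dist x a))} :=
  jBall_subset_cassinianBall_subset_punctured_general n a x hx t ht ht1
end

section
/- Let n ≥ 2, a ∈ ℝⁿ, D = ℝⁿ∖{a}, x ∈ D, and t > 0 with t|x−a| < 1. Set u = (x−a)/|x−a|, y₁ = x − (t|x−a|²/(1 + t|x−a|)) u and y₂ = x + (t|x−a|²/(1 − t|x−a|)) u. Then j_D(x, y₁) = log(1 + t|x−a|) and j_D(x, y₂) = log(1/(1 − t|x−a|)), while c_D(x,y₁) = c_D(x,y₂) = t; hence the radii r = log(1 + t|x−a|) and R = log(1/(1 − t|x−a|)) in the inclusion B_j(x,r) ⊂ B_c(x,t) ⊂ B_j(x,R) are best possible. -/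
open Metric Set

/-!
Both `y₁` and `y₂` lie on the ray from `a` through `x`, at the points `a + s (x - a)` with
`s = 1/(1 + t|x-a|)` and `s = 1/(1 - t|x-a|)`. On that ray every distance is a multiple of
`|x - a|`, so `c_D(x, y) = |1/s - 1| / |x - a|`, while the ratio in `j_D(x, y)` is `1/s - 1`
for `s ≤ 1` and `s - 1` for `s ≥ 1`; substituting the two values of `s` gives the four
identities.
-/

open AffineMap

section Ray

variable {V P : Type*} [NormedAddCommGroup V] [NormedSpace ℝ V] [MetricSpace P]
  [NormedAddTorsor V P]

theorem add_smul_normalize_eq_lineMap (a x : V) (r : ℝ) :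
    x + r • ‖x - a‖⁻¹ • (x - a) = lineMap a x (1 + r / ‖x - a‖) := by
  rw [lineMap_apply_module', smul_smul, add_smul, one_smul, div_eq_mul_inv]
  abel

theorem dist_lineMap_div_mul_dist {s : ℝ} (hs : s ≠ 0) (a x : P) :
    dist x (lineMap a x s) / (dist x a * dist (lineMap a x s) a) = |s⁻¹ - 1| / dist x a := by
  rw [dist_right_lineMap, dist_lineMap_left, dist_comm a x, Real.norm_eq_abs,
    Real.norm_eq_abs]
  rcases (dist_nonneg (x := x) (y := a)).eq_or_lt with h | h
  · simp [← h]
  · have hinv : s⁻¹ - 1 = (1 - s) / s := by field_simp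
    rw [hinv, abs_div]
    field_simp

theorem dist_lineMap_div_min_of_le_one {s : ℝ} (hs : 0 < s) (hs1 : s ≤ 1) {a x : P}
    (hx : x ≠ a) :
    dist x (lineMap a x s) / min (dist x a) (dist (lineMap a x s) a) = s⁻¹ - 1 := by
  have hd : 0 < dist x a := dist_pos.2 hx
  rw [dist_right_lineMap, dist_lineMap_left, dist_comm a x, Real.norm_eq_abs,
    Real.norm_eq_abs, abs_of_nonneg (by linarith), abs_of_pos hs, min_eq_right]
  · field_simp
  · nlinarith

theorem dist_lineMap_div_min_of_one_le {s : ℝ} (hs1 : 1 ≤ s) {a x : P} (hx : x ≠ a) :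
    dist x (lineMap a x s) / min (dist x a) (dist (lineMap a x s) a) = s - 1 := by
  have hd : 0 < dist x a := dist_pos.2 hx
  rw [dist_right_lineMap, dist_lineMap_left, dist_comm a x, Real.norm_eq_abs,
    Real.norm_eq_abs, abs_of_nonpos (by linarith), abs_of_pos (by linarith), min_eq_left]
  · field_simp; ring
  · nlinarith

end Ray

theorem cassinian_j_inclusion_sharp_general (n : ℕ)
    (a x : E n) (hx : x ≠ a) (t : ℝ) (ht : 0 < t) (ht1 : t * ‖x - a‖ < 1)
    (u y₁ y₂ : E n)
    (hu : u = ‖x - a‖⁻¹ • (x - a))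
    (hy₁ : y₁ = x - (t * ‖x - a‖ ^ 2 / (1 + t * ‖x - a‖)) • u)
    (hy₂ : y₂ = x + (t * ‖x - a‖ ^ 2 / (1 - t * ‖x - a‖)) • u) :
    Real.log (1 + dist x y₁ / min (dist x a) (dist y₁ a))
        = Real.log (1 + t * ‖x - a‖) ∧
      Real.log (1 + dist x y₂ / min (dist x a) (dist y₂ a))
        = Real.log (1 / (1 - t * ‖x - a‖)) ∧
      dist x y₁ / (dist x a * dist y₁ a) = t ∧
      dist x y₂ / (dist x a * dist y₂ a) = t := by
  have hd : 0 < ‖x - a‖ := norm_pos_iff.2 (sub_ne_zero.2 hx)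
  have hp : 0 < t * ‖x - a‖ := mul_pos ht hd
  have hm : 0 < 1 - t * ‖x - a‖ := sub_pos.2 ht1
  have hy₁ : y₁ = lineMap a x (1 + t * ‖x - a‖)⁻¹ := by
    rw [hy₁, hu, sub_eq_add_neg, ← neg_smul, add_smul_normalize_eq_lineMap]
    congr 1
    field_simp
    ring
  have hy₂ : y₂ = lineMap a x (1 - t * ‖x - a‖)⁻¹ := by
    rw [hy₂, hu, add_smul_normalize_eq_lineMap]
    congr 1
    field_simp
    ring
  subst hy₁ hy₂
  rw [dist_lineMap_div_min_of_le_one (by positivity) (inv_le_one_of_one_le₀ (by linarith)) hx,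
    dist_lineMap_div_min_of_one_le ((one_le_inv₀ hm).2 (by linarith)) hx,
    dist_lineMap_div_mul_dist (by positivity), dist_lineMap_div_mul_dist (by positivity),
    dist_eq_norm, inv_inv, inv_inv, add_sub_cancel_left, sub_sub_cancel_left, abs_neg,
    abs_of_pos hp, mul_div_cancel_right₀ t hd.ne', add_sub_cancel, one_div]
  exact ⟨rfl, rfl, rfl, rfl⟩

/-- **Sharpness of the `j`-metric inclusions for Cassinian balls of punctured space.**
Let `D = ℝⁿ∖{a}`, `x ∈ D`, `t > 0` with `t|x-a| < 1`, `u = (x-a)/|x-a|`,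
`y₁ = x - (t|x-a|²/(1+t|x-a|)) u` and `y₂ = x + (t|x-a|²/(1-t|x-a|)) u`.
Then `j_D(x,y₁) = log(1 + t|x-a|)` and `j_D(x,y₂) = log(1/(1-t|x-a|))`, while
`c_D(x,y₁) = c_D(x,y₂) = t`; hence the radii `r = log(1 + t|x-a|)` and
`R = log(1/(1-t|x-a|))` in `B_j(x,r) ⊆ B_c(x,t) ⊆ B_j(x,R)` are best possible. -/
theorem cassinian_j_inclusion_sharp (n : ℕ) (hn : 2 ≤ n)
    (a x : E n) (hx : x ≠ a) (t : ℝ) (ht : 0 < t) (ht1 : t * ‖x - a‖ < 1)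
    (u y₁ y₂ : E n)
    (hu : u = ‖x - a‖⁻¹ • (x - a))
    (hy₁ : y₁ = x - (t * ‖x - a‖ ^ 2 / (1 + t * ‖x - a‖)) • u)
    (hy₂ : y₂ = x + (t * ‖x - a‖ ^ 2 / (1 - t * ‖x - a‖)) • u) :
    Real.log (1 + dist x y₁ / min (dist x a) (dist y₁ a))
        = Real.log (1 + t * ‖x - a‖) ∧
      Real.log (1 + dist x y₂ / min (dist x a) (dist y₂ a))
        = Real.log (1 / (1 - t * ‖x - a‖)) ∧
      dist x y₁ / (dist x a * dist y₁ a) = t ∧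
      dist x y₂ / (dist x a * dist y₂ a) = t :=
  cassinian_j_inclusion_sharp_general n a x hx t ht ht1 u y₁ y₂ hu hy₁ hy₂
end

section
/- Let n ≥ 2, a ∈ ℝⁿ, D = ℝⁿ∖{a}, x ∈ D, and t > 0. Then B_k(x, r) ⊂ B_c(x, t), where r = log(1 + t|x−a|). -/
open Metric Set

/-- The quasihyperbolic metric of a domain `D`:
`k_D(x,y) = inf_γ ∫_γ |dz| / δ_D(z)`, the infimum of the quasihyperbolic lengths of
curves in `D` joining `x` and `y`, where `δ_D(z) = dist(z, ∂D)`. -/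
noncomputable def quasiHyperDist {n : ℕ} (D : Set (E n)) (x y : E n) : ℝ :=
  sInf {L : ℝ | ∃ γ : ℝ → E n, ContDiff ℝ 1 γ ∧ γ 0 = x ∧ γ 1 = y ∧
    (∀ s ∈ Icc (0 : ℝ) 1, γ s ∈ D) ∧
    L = ∫ s in (0 : ℝ)..1, ‖deriv γ s‖ / infDist (γ s) (frontier D)}

/-! Along a C¹ curve `γ` from `x` to `y` avoiding `a`, let `ℓ(s)` be the length of `γ` on `[s, 1]`.
Then `|γ(s) - a| ≤ |y - a| + ℓ(s)`, and `|γ'(s)| / (|y - a| + ℓ(s))` is the derivative of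
`-log (|y - a| + ℓ(s))`, so the quasihyperbolic length of `γ` is at least
`log (1 + ℓ(0) / |y - a|) ≥ log (1 + |x - y| / |y - a|)`. Since `n ≥ 2` such curves exist, so this
bounds `k(x, y)` from below, and `k(x, y) < log (1 + t |x - a|)` forces `|x - y| < t |x - a| |y - a|`. -/

open RealInnerProductSpace

theorem exists_ne_zero_inner_eq_zero {F : Type*} [NormedAddCommGroup F] [InnerProductSpace ℝ F]
    (hF : 2 ≤ Module.finrank ℝ F) (w : F) : ∃ v : F, v ≠ 0 ∧ ⟪w, v⟫ = 0 := by
  have hne : (ℝ ∙ w)ᗮ ≠ ⊥ := by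
    rw [Ne, Submodule.orthogonal_eq_bot_iff]
    intro htop
    have := finrank_span_le_card (R := ℝ) ({w} : Set F)
    rw [htop, finrank_top] at this
    simp only [toFinset_singleton, Finset.card_singleton] at this
    omega
  obtain ⟨v, hv, hv0⟩ := Submodule.exists_mem_ne_zero_of_ne_bot hne
  exact ⟨v, hv0, Submodule.inner_right_of_mem_orthogonal (Submodule.mem_span_singleton_self w) hv⟩

theorem exists_contDiff_curve_avoiding {F : Type*} [NormedAddCommGroup F] [InnerProductSpace ℝ F]
    (hF : 2 ≤ Module.finrank ℝ F) {a x y : F} (hx : x ≠ a) (hy : y ≠ a) :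
    ∃ γ : ℝ → F, ContDiff ℝ 1 γ ∧ γ 0 = x ∧ γ 1 = y ∧ ∀ s ∈ Icc (0 : ℝ) 1, γ s ≠ a := by
  by_cases hline : ∃ c : ℝ, a - x = c • (y - x)
  · -- `a` lies on the line through `x` and `y`: bend the segment off that line.
    obtain ⟨c, hc⟩ := hline
    obtain ⟨v, hv0, hv⟩ := exists_ne_zero_inner_eq_zero hF (y - x)
    refine ⟨fun s ↦ x + s • (y - x) + (s * (1 - s)) • v, by fun_prop, by simp, by simp, ?_⟩
    rintro s - hs
    beta_reduce at hs
    have hcurve : s • (y - x) + (s * (1 - s)) • v = c • (y - x) := by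
      rw [← hc, ← hs]; abel
    have hs01 : (s = 0 ∨ 1 - s = 0) ∨ v = 0 := by
      simpa [inner_add_right, inner_smul_right, real_inner_comm (y - x) v, hv] using
        congrArg (⟪v, ·⟫) hcurve
    rcases hs01 with (rfl | hs1) | rfl
    · exact hx (by simpa using hs)
    · obtain rfl : s = 1 := by linarith
      exact hy (by simpa using hs)
    · exact hv0 rfl
  · refine ⟨fun s ↦ x + s • (y - x), by fun_prop, by simp, by simp, fun s _ hs ↦ hline ⟨s, ?_⟩⟩
    rw [← hs, add_sub_cancel_left]

theorem frontier_compl_singleton {X : Type*} [TopologicalSpace X] [T1Space X] (x : X)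
    [Filter.NeBot (nhdsWithin x {x}ᶜ)] : frontier {x}ᶜ = {x} := by
  rw [frontier_compl, frontier, closure_singleton, interior_singleton, sdiff_empty]

theorem dist_le_integral_norm_deriv {F : Type*} [NormedAddCommGroup F] [NormedSpace ℝ F]
    [CompleteSpace F] {γ : ℝ → F} (hγ : ContDiff ℝ 1 γ) {s u : ℝ} (hsu : s ≤ u) :
    dist (γ s) (γ u) ≤ ∫ τ in s..u, ‖deriv γ τ‖ := by
  rw [dist_comm, dist_eq_norm, ← intervalIntegral.integral_deriv_eq_sub
    (fun τ _ ↦ (hγ.differentiable one_ne_zero).differentiableAt)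
    ((hγ.continuous_deriv le_rfl).intervalIntegrable s u)]
  exact intervalIntegral.norm_integral_le_integral_norm hsu

theorem integral_div_add_integral_eq_log_sub_log {g : ℝ → ℝ} (hg : Continuous g) {a b d : ℝ}
    (hab : a ≤ b) (hg0 : ∀ s ∈ Icc a b, 0 ≤ g s) (hd : 0 < d) :
    ∫ s in a..b, g s / (d + ∫ τ in s..b, g τ) = Real.log (d + ∫ τ in a..b, g τ) - Real.log d := by
  have hpos : ∀ s ∈ uIcc a b, 0 < d + ∫ τ in s..b, g τ := fun s hs ↦ by
    rw [uIcc_of_le hab] at hs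
    have : 0 ≤ ∫ τ in s..b, g τ :=
      intervalIntegral.integral_nonneg hs.2 fun τ hτ ↦ hg0 τ ⟨hs.1.trans hτ.1, hτ.2⟩
    linarith
  have hderiv : ∀ s ∈ uIcc a b, HasDerivAt (fun s ↦ -Real.log (d + ∫ τ in s..b, g τ))
      (g s / (d + ∫ τ in s..b, g τ)) s := fun s hs ↦ by
    have := (((intervalIntegral.integral_hasDerivAt_left (hg.intervalIntegrable s b)
      (hg.stronglyMeasurableAtFilter _ _) hg.continuousAt).const_add d).log
      (hpos s hs).ne').neg
    rwa [neg_div, neg_neg] at this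
  have hcont : ContinuousOn (fun s ↦ d + ∫ τ in s..b, g τ) (uIcc a b) :=
    continuousOn_const.add (intervalIntegral.continuousOn_primitive_interval_left hg.integrableOn_uIcc)
  rw [intervalIntegral.integral_eq_sub_of_hasDerivAt hderiv
    (hg.continuousOn.div hcont fun s hs ↦ (hpos s hs).ne').intervalIntegrable]
  simp only [intervalIntegral.integral_same, add_zero]
  ring

theorem log_one_add_dist_div_le_integral {F : Type*} [NormedAddCommGroup F] [NormedSpace ℝ F]
    [CompleteSpace F] {γ : ℝ → F} (hγ : ContDiff ℝ 1 γ) {a : F}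
    (hγa : ∀ s ∈ Icc (0 : ℝ) 1, γ s ≠ a) :
    Real.log (1 + dist (γ 0) (γ 1) / dist (γ 1) a)
      ≤ ∫ s in (0 : ℝ)..1, ‖deriv γ s‖ / dist (γ s) a := by
  have hg : Continuous fun s ↦ ‖deriv γ s‖ := (hγ.continuous_deriv le_rfl).norm
  set d := dist (γ 1) a
  have hd : 0 < d := dist_pos.2 (hγa 1 ⟨zero_le_one, le_rfl⟩)
  have hdist : ∀ s ∈ Icc (0 : ℝ) 1, dist (γ s) a ≤ d + ∫ τ in s..1, ‖deriv γ τ‖ := fun s hs ↦ by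
    linarith [dist_triangle (γ s) (γ 1) a, dist_le_integral_norm_deriv hγ hs.2]
  have hlength : dist (γ 0) (γ 1) ≤ ∫ τ in (0 : ℝ)..1, ‖deriv γ τ‖ :=
    dist_le_integral_norm_deriv hγ zero_le_one
  calc Real.log (1 + dist (γ 0) (γ 1) / d)
      ≤ Real.log ((d + ∫ τ in (0 : ℝ)..1, ‖deriv γ τ‖) / d) := by
        gcongr
        rw [add_div, div_self hd.ne']
        gcongr
    _ = ∫ s in (0 : ℝ)..1, ‖deriv γ s‖ / (d + ∫ τ in s..1, ‖deriv γ τ‖) := by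
        rw [integral_div_add_integral_eq_log_sub_log hg zero_le_one (fun _ _ ↦ norm_nonneg _) hd,
          Real.log_div (by linarith [dist_nonneg (x := γ 0) (y := γ 1)]) hd.ne']
    _ ≤ ∫ s in (0 : ℝ)..1, ‖deriv γ s‖ / dist (γ s) a := by
        have hI : uIcc (0 : ℝ) 1 = Icc 0 1 := uIcc_of_le zero_le_one
        refine intervalIntegral.integral_mono_on zero_le_one ?_ ?_ fun s hs ↦
          div_le_div_of_nonneg_left (norm_nonneg _) (dist_pos.2 (hγa s hs)) (hdist s hs)
        · refine (hg.continuousOn.div (continuousOn_const.add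
            (intervalIntegral.continuousOn_primitive_interval_left hg.integrableOn_uIcc))
            fun s hs ↦ ?_).intervalIntegrable
          rw [hI] at hs
          exact ((dist_pos.2 (hγa s hs)).trans_le (hdist s hs)).ne'
        · exact (hg.continuousOn.div (hγ.continuous.dist continuous_const).continuousOn
            fun s hs ↦ dist_ne_zero.2 (hγa s (hI ▸ hs))).intervalIntegrable

theorem log_one_add_dist_div_le_quasiHyperDist {n : ℕ} (hn : 2 ≤ n) {a x y : E n} (hx : x ≠ a)
    (hy : y ≠ a) : Real.log (1 + dist x y / dist y a) ≤ quasiHyperDist {a}ᶜ x y := by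
  have hdim : 2 ≤ Module.finrank ℝ (E n) := by rwa [finrank_euclideanSpace_fin]
  have : Nontrivial (E n) := Module.nontrivial_of_finrank_pos (R := ℝ) (by omega)
  obtain ⟨γ, hγ, hγx, hγy, hγa⟩ := exists_contDiff_curve_avoiding hdim hx hy
  refine le_csInf ⟨_, γ, hγ, hγx, hγy, hγa, rfl⟩ ?_
  rintro _ ⟨γ, hγ, rfl, rfl, hγa, rfl⟩
  simp only [frontier_compl_singleton, infDist_singleton]
  exact log_one_add_dist_div_le_integral hγ hγa

/-- **Quasihyperbolic balls inside Cassinian balls in punctured space.**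
Let `D = ℝⁿ∖{a}`, `x ∈ D` and `t > 0`.  Then `B_k(x,r) ⊆ B_c(x,t)` with
`r = log(1 + t|x-a|)`; here `c_D(x,y) = |x-y|/(|x-a||y-a|)`. -/
theorem quasihyperbolicBall_subset_cassinianBall_punctured (n : ℕ) (hn : 2 ≤ n)
    (a x : E n) (hx : x ≠ a) (t : ℝ) (ht : 0 < t) :
    {y : E n | y ≠ a ∧ quasiHyperDist {a}ᶜ x y < Real.log (1 + t * dist x a)}
      ⊆ {y : E n | y ≠ a ∧ dist x y / (dist x a * dist y a) < t} := by
  rintro y ⟨hy, hk⟩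
  refine ⟨hy, ?_⟩
  have hxa : 0 < dist x a := dist_pos.2 hx
  have hya : 0 < dist y a := dist_pos.2 hy
  have hlt : 1 + dist x y / dist y a < 1 + t * dist x a :=
    (Real.log_lt_log_iff (by positivity) (by positivity)).1
      ((log_one_add_dist_div_le_quasiHyperDist hn hx hy).trans_lt hk)
  rw [div_lt_iff₀ (by positivity), ← mul_assoc, ← div_lt_iff₀ hya]
  linarith
end

section
/- Let D ⊊ ℝⁿ (n ≥ 2) be a domain, x ∈ D, and t ∈ (0, log 2/(δ_D(x)(1 + log 2))). Then B_k(x, r) ⊂ B_c(x, t) ⊂ B_k(x, R), where r = log(1 + t δ_D(x)/(1 + t δ_D(x))) and R = log(1/(2 − exp(t δ_D(x)/(1 − t δ_D(x))))). -/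
/-!
Everything is compared with `|x - y|` at the scale `δ = δ_D(x)`. Along a curve starting at `x`,
`δ_D` is at most `δ` plus the arc length travelled, so `k_D(x, y) ≥ log (1 + |x - y| / δ)`;
the straight segment gives `k_D(x, y) ≤ log (δ / (δ - |x - y|))` when `|x - y| < δ`.
For the Cassinian metric, the triangle inequality gives `c_D(x, y) ≤ |x - y| / (δ (δ - |x - y|))`,
and evaluating the supremum at a boundary point nearest to `x` gives
`c_D(x, y) ≥ |x - y| / (δ (δ + |x - y|))`. The radii `r` and `R` are what these four estimates
yield; for `R` one uses `1 + v ≤ exp v`, and `v < log 2` keeps `2 - exp v` positive.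
-/

open Metric Set

open Real intervalIntegral

section FlatJoinedIn

variable {V : Type*} [NormedAddCommGroup V] [NormedSpace ℝ V] {D : Set V} {x y z : V}

/-- Constancy outside `[0, 1]` is what makes concatenations of such curves `C¹` again. -/
def FlatJoinedIn (D : Set V) (x y : V) : Prop :=
  ∃ γ : ℝ → V, ContDiff ℝ 1 γ ∧ range γ ⊆ D ∧ (∀ s ≤ 0, γ s = x) ∧ ∀ s, 1 ≤ s → γ s = y

theorem FlatJoinedIn.of_segment_subset (h : segment ℝ x y ⊆ D) : FlatJoinedIn D x y := by
  refine ⟨fun s => x + smoothTransition s • (y - x),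
    contDiff_const.add (smoothTransition.contDiff.smul contDiff_const), ?_,
    fun s hs => by simp [smoothTransition.zero_of_nonpos hs],
    fun s hs => by simp [smoothTransition.one_of_one_le hs]⟩
  rintro _ ⟨s, rfl⟩
  rw [segment_eq_image'] at h
  exact h (mem_image_of_mem _ ⟨smoothTransition.nonneg s, smoothTransition.le_one s⟩)

theorem FlatJoinedIn.trans (hxy : FlatJoinedIn D x y) (hyz : FlatJoinedIn D y z) :
    FlatJoinedIn D x z := by
  obtain ⟨γ₁, hγ₁, hD₁, hx₁, hy₁⟩ := hxy
  obtain ⟨γ₂, hγ₂, hD₂, hy₂, hz₂⟩ := hyz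
  -- Run `γ₁` on `[0, 1/2]` and `γ₂` on `[1/2, 1]`; the unused one is parked at `y`.
  have h_left : ∀ s ≤ 1 / 2, γ₁ (2 * s) + γ₂ (2 * s - 1) - y = γ₁ (2 * s) := fun s hs => by
    rw [hy₂ _ (by linarith), add_sub_cancel_right]
  have h_right : ∀ s, 1 / 2 ≤ s → γ₁ (2 * s) + γ₂ (2 * s - 1) - y = γ₂ (2 * s - 1) :=
    fun s hs => by rw [hy₁ _ (by linarith), add_sub_cancel_left]
  refine ⟨fun s => γ₁ (2 * s) + γ₂ (2 * s - 1) - y, by fun_prop, ?_,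
    fun s hs => (h_left s (by linarith)).trans (hx₁ _ (by linarith)),
    fun s hs => (h_right s (by linarith)).trans (hz₂ _ (by linarith))⟩
  rintro _ ⟨s, rfl⟩
  dsimp only
  rcases le_total s (1 / 2) with hs | hs
  · rw [h_left s hs]; exact hD₁ (mem_range_self _)
  · rw [h_right s hs]; exact hD₂ (mem_range_self _)

theorem IsPreconnected.flatJoinedIn (hconn : IsPreconnected D) (hD : IsOpen D) (hx : x ∈ D)
    (hy : y ∈ D) : FlatJoinedIn D x y := by
  refine hconn.induction₂' (FlatJoinedIn D) (fun a ha => ?_)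
    (fun _ _ _ _ _ _ => FlatJoinedIn.trans) hx hy
  obtain ⟨ε, hε, hball⟩ := Metric.isOpen_iff.1 hD a ha
  filter_upwards [nhdsWithin_le_nhds (ball_mem_nhds a hε)] with b hb
  have hseg := (convex_ball a ε).segment_subset (mem_ball_self hε) hb
  exact ⟨.of_segment_subset (hseg.trans hball),
    .of_segment_subset ((segment_symm ℝ b a).subset.trans (hseg.trans hball))⟩

end FlatJoinedIn

theorem integral_div_eq_log_sub {f f' : ℝ → ℝ} {a b : ℝ}
    (hf : ∀ s ∈ uIcc a b, HasDerivAt f (f' s) s) (hpos : ∀ s ∈ uIcc a b, 0 < f s)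
    (hint : IntervalIntegrable (fun s => f' s / f s) MeasureTheory.volume a b) :
    ∫ s in a..b, f' s / f s = log (f b) - log (f a) :=
  integral_eq_sub_of_hasDerivAt (fun s hs => (hf s hs).log (hpos s hs).ne') hint

section CurveLength

variable {V : Type*} [NormedAddCommGroup V] [NormedSpace ℝ V]

theorem norm_sub_le_integral_norm_deriv [CompleteSpace V] {γ : ℝ → V} (hγ : ContDiff ℝ 1 γ)
    {a b : ℝ} (hab : a ≤ b) : ‖γ b - γ a‖ ≤ ∫ s in a..b, ‖deriv γ s‖ := by
  rw [← integral_deriv_eq_sub (fun s _ => (hγ.differentiable one_ne_zero).differentiableAt)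
    ((hγ.continuous_deriv le_rfl).intervalIntegrable a b)]
  exact norm_integral_le_integral_norm hab

theorem log_one_add_dist_div_infDist_le_integral [CompleteSpace V] {F : Set V} {γ : ℝ → V}
    (hγ : ContDiff ℝ 1 γ) (hpos : ∀ s ∈ Icc (0 : ℝ) 1, 0 < infDist (γ s) F) :
    log (1 + dist (γ 0) (γ 1) / infDist (γ 0) F) ≤
      ∫ s in (0 : ℝ)..1, ‖deriv γ s‖ / infDist (γ s) F := by
  set δ := infDist (γ 0) F
  have hδ : 0 < δ := hpos 0 (left_mem_Icc.2 zero_le_one)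
  have hcont : Continuous fun s => ‖deriv γ s‖ := (hγ.continuous_deriv le_rfl).norm
  -- Comparing with `δ + ℓ`, where `ℓ s` is the length of `γ` on `[0, s]`, turns the integral
  -- into the logarithmic derivative of `δ + ℓ`.
  set ℓ : ℝ → ℝ := fun s => ∫ u in (0 : ℝ)..s, ‖deriv γ u‖
  have hℓ : ∀ s, HasDerivAt ℓ ‖deriv γ s‖ s := fun s =>
    (hcont.integral_hasStrictDerivAt 0 s).hasDerivAt
  have hℓ_nonneg : ∀ s ∈ Icc (0 : ℝ) 1, 0 ≤ ℓ s := fun s hs =>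
    integral_nonneg hs.1 fun _ _ => norm_nonneg _
  have hdist_le : ∀ s ∈ Icc (0 : ℝ) 1, dist (γ s) (γ 0) ≤ ℓ s := fun s hs => by
    rw [dist_eq_norm]; exact norm_sub_le_integral_norm_deriv hγ hs.1
  have h_infDist_le : ∀ s ∈ Icc (0 : ℝ) 1, infDist (γ s) F ≤ δ + ℓ s := fun s hs => by
    linarith [infDist_le_infDist_add_dist (x := γ s) (y := γ 0) (s := F), hdist_le s hs]
  have hδℓ_pos : ∀ s ∈ Icc (0 : ℝ) 1, 0 < δ + ℓ s := fun s hs => by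
    linarith [hℓ_nonneg s hs]
  have hint : IntervalIntegrable (fun s => ‖deriv γ s‖ / (δ + ℓ s)) MeasureTheory.volume 0 1 :=
    (hcont.continuousOn.div (continuous_const.add
      (continuous_iff_continuousAt.2 fun s => (hℓ s).continuousAt)).continuousOn
      fun s hs => (hδℓ_pos s hs).ne').intervalIntegrable_of_Icc zero_le_one
  have hint' : IntervalIntegrable (fun s => ‖deriv γ s‖ / infDist (γ s) F)
      MeasureTheory.volume 0 1 :=
    (hcont.continuousOn.div ((continuous_infDist_pt F).comp hγ.continuous).continuousOn
      fun s hs => (hpos s hs).ne').intervalIntegrable_of_Icc zero_le_one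
  have hℓ0 : ℓ 0 = 0 := integral_same
  calc log (1 + dist (γ 0) (γ 1) / δ) ≤ log (δ + ℓ 1) - log (δ + ℓ 0) := by
        rw [hℓ0, add_zero, ← log_div (hδℓ_pos 1 (right_mem_Icc.2 zero_le_one)).ne' hδ.ne',
          add_div, div_self hδ.ne', dist_comm]
        gcongr
        exact hdist_le 1 (right_mem_Icc.2 zero_le_one)
    _ = ∫ s in (0 : ℝ)..1, ‖deriv γ s‖ / (δ + ℓ s) := by
        refine (integral_div_eq_log_sub (fun s _ => (hℓ s).const_add δ) (fun s hs => ?_) hint).symm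
        exact hδℓ_pos s (by rwa [uIcc_of_le zero_le_one] at hs)
    _ ≤ _ := integral_mono_on zero_le_one hint hint' fun s hs =>
        div_le_div_of_nonneg_left (norm_nonneg _) (hpos s hs) (h_infDist_le s hs)

theorem integral_segment_div_infDist_le_log {F : Set V} {x y : V} (hd : dist x y < infDist x F) :
    ∫ s in (0 : ℝ)..1, ‖deriv (fun s => x + s • (y - x)) s‖ / infDist (x + s • (y - x)) F ≤
      log (infDist x F / (infDist x F - dist x y)) := by
  set δ := infDist x F
  set d := dist x y
  have hderiv : ∀ s : ℝ, ‖deriv (fun s => x + s • (y - x)) s‖ = d := fun s => by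
    have : HasDerivAt (fun s : ℝ => x + s • (y - x)) (y - x) s := by
      simpa using ((hasDerivAt_id s).smul_const (y - x)).const_add x
    rw [this.deriv, ← dist_eq_norm, dist_comm]
  have hpos : ∀ s ∈ Icc (0 : ℝ) 1, 0 < δ - s * d := fun s hs => by
    nlinarith [hs.2, dist_nonneg (x := x) (y := y)]
  have h_le_infDist : ∀ s ∈ Icc (0 : ℝ) 1, δ - s * d ≤ infDist (x + s • (y - x)) F :=
    fun s hs => by
      have := infDist_le_infDist_add_dist (x := x) (y := x + s • (y - x)) (s := F)
      rw [dist_self_add_right, norm_smul, Real.norm_of_nonneg hs.1, ← dist_eq_norm,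
        dist_comm] at this
      linarith
  have hint : IntervalIntegrable (fun s => -d / (δ - s * d)) MeasureTheory.volume 0 1 :=
    (continuousOn_const.div (by fun_prop) fun s hs => (hpos s hs).ne').intervalIntegrable_of_Icc
      zero_le_one
  calc ∫ s in (0 : ℝ)..1, ‖deriv (fun s => x + s • (y - x)) s‖ / infDist (x + s • (y - x)) F
      ≤ ∫ s in (0 : ℝ)..1, -(-d / (δ - s * d)) := by
        refine integral_mono_on zero_le_one ?_ hint.neg fun s hs => ?_
        · refine (ContinuousOn.div (by simp only [hderiv]; fun_prop)
            (continuous_infDist_pt F |>.comp (by fun_prop)).continuousOn fun s hs =>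
            (hpos s hs |>.trans_le (h_le_infDist s hs)).ne').intervalIntegrable_of_Icc zero_le_one
        · rw [hderiv, neg_div, neg_neg]
          exact div_le_div_of_nonneg_left dist_nonneg (hpos s hs) (h_le_infDist s hs)
    _ = log (δ / (δ - d)) := by
        rw [intervalIntegral.integral_neg, integral_div_eq_log_sub (f := fun s => δ - s * d)
          (fun s _ => by simpa using ((hasDerivAt_id s).mul_const d).const_sub δ)
          (fun s hs => hpos s (by rwa [uIcc_of_le zero_le_one] at hs)) hint]
        simp only [one_mul, zero_mul, sub_zero, neg_sub]
        exact (log_div (dist_nonneg.trans_lt hd).ne' (sub_pos.2 hd).ne').symm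

end CurveLength

theorem IsOpen.infDist_frontier_pos {X : Type*} [PseudoMetricSpace X] {D : Set X} {x : X}
    (hD : IsOpen D) (hfr : (frontier D).Nonempty) (hx : x ∈ D) : 0 < infDist x (frontier D) :=
  (isClosed_frontier.notMem_iff_infDist_pos hfr).1 fun h => h.2 (hD.interior_eq.symm ▸ hx)

theorem IsOpen.ball_infDist_frontier_subset {V : Type*} [NormedAddCommGroup V] [NormedSpace ℝ V]
    {D : Set V} {x : V} (hD : IsOpen D) (hx : x ∈ D) : ball x (infDist x (frontier D)) ⊆ D := by
  intro z hz
  refine (convex_ball _ _).isPreconnected.subset_of_closure_inter_subset hD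
    ⟨x, mem_ball_self (dist_nonneg.trans_lt hz), hx⟩ ?_ hz
  rintro w ⟨hw_closure, hw_ball⟩
  by_contra hw
  exact disjoint_ball_infDist.notMem_of_mem_left hw_ball ⟨hw_closure, hD.interior_eq.symm ▸ hw⟩

variable {n : ℕ} {D : Set (E n)} {x y : E n}

theorem quasiHyperDist_le_integral {γ : ℝ → E n} (hγ : ContDiff ℝ 1 γ) (hγx : γ 0 = x)
    (hγy : γ 1 = y) (hγD : ∀ s ∈ Icc (0 : ℝ) 1, γ s ∈ D) :
    quasiHyperDist D x y ≤ ∫ s in (0 : ℝ)..1, ‖deriv γ s‖ / infDist (γ s) (frontier D) := by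
  refine csInf_le ⟨0, ?_⟩ ⟨γ, hγ, hγx, hγy, hγD, rfl⟩
  rintro L ⟨γ, -, -, -, -, rfl⟩
  exact integral_nonneg zero_le_one fun _ _ => div_nonneg (norm_nonneg _) infDist_nonneg

theorem quasiHyperDist_le_log_of_dist_lt (hD : IsOpen D) (hx : x ∈ D)
    (hd : dist x y < infDist x (frontier D)) :
    quasiHyperDist D x y ≤
      log (infDist x (frontier D) / (infDist x (frontier D) - dist x y)) := by
  have hseg : ∀ s ∈ Icc (0 : ℝ) 1, x + s • (y - x) ∈ D := fun s hs => by
    refine hD.ball_infDist_frontier_subset hx ((convex_ball _ _).segment_subset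
      (mem_ball_self (dist_nonneg.trans_lt hd)) (mem_ball'.2 hd) ?_)
    rw [segment_eq_image']
    exact mem_image_of_mem _ hs
  exact (quasiHyperDist_le_integral (by fun_prop) (by simp) (by simp) hseg).trans
    (integral_segment_div_infDist_le_log hd)

theorem log_one_add_dist_div_le_quasiHyperDist_s18 (hD : IsOpen D) (hconn : IsPreconnected D)
    (hfr : (frontier D).Nonempty) (hx : x ∈ D) (hy : y ∈ D) :
    log (1 + dist x y / infDist x (frontier D)) ≤ quasiHyperDist D x y := by
  obtain ⟨γ, hγ, hγD, hγx, hγy⟩ := hconn.flatJoinedIn hD hx hy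
  refine le_csInf ⟨_, γ, hγ, hγx 0 le_rfl, hγy 1 le_rfl, fun s _ => hγD (mem_range_self s), rfl⟩ ?_
  rintro L ⟨γ, hγ, rfl, rfl, hγD, rfl⟩
  exact log_one_add_dist_div_infDist_le_integral hγ fun s hs =>
    hD.infDist_frontier_pos hfr (hγD s hs)

theorem cassinian_le_of_dist_lt (hd : dist x y < infDist x (frontier D)) :
    cassinian D x y ≤
      dist x y / (infDist x (frontier D) * (infDist x (frontier D) - dist x y)) := by
  have hδ := dist_nonneg.trans_lt hd
  have hbound : 0 ≤ dist x y / (infDist x (frontier D) * (infDist x (frontier D) - dist x y)) :=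
    div_nonneg dist_nonneg (mul_nonneg hδ.le (sub_pos.2 hd).le)
  refine Real.iSup_le (fun p => Real.iSup_le (fun hp => ?_) hbound) hbound
  have hxp : infDist x (frontier D) ≤ dist x p := infDist_le_dist_of_mem hp
  have hpy : infDist x (frontier D) - dist x y ≤ dist p y := by
    linarith [dist_triangle x y p, dist_comm y p]
  exact div_le_div_of_nonneg_left dist_nonneg (mul_pos hδ (sub_pos.2 hd))
    (mul_le_mul hxp hpy (sub_pos.2 hd).le (hδ.le.trans hxp))

theorem div_le_cassinian (hD : IsOpen D) (hfr : (frontier D).Nonempty) (hx : x ∈ D)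
    (hy : y ∈ D) {p : E n} (hp : p ∈ frontier D) :
    dist x y / (dist x p * dist p y) ≤ cassinian D x y := by
  have hδx := hD.infDist_frontier_pos hfr hx
  have hδy := hD.infDist_frontier_pos hfr hy
  refine le_ciSup_of_le ⟨dist x y / (infDist x (frontier D) * infDist y (frontier D)), ?_⟩ p
    (ciSup_pos (f := fun _ => dist x y / (dist x p * dist p y)) hp).ge
  rintro _ ⟨q, rfl⟩
  refine Real.iSup_le (fun hq => ?_) (by positivity)
  exact div_le_div_of_nonneg_left dist_nonneg (by positivity) (mul_le_mul
    (infDist_le_dist_of_mem hq) (dist_comm q y ▸ infDist_le_dist_of_mem hq) hδy.le dist_nonneg)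

theorem dist_lt_of_cassinian_lt (hD : IsOpen D) (hfr : (frontier D).Nonempty) (hx : x ∈ D)
    (hy : y ∈ D) {t : ℝ} (hc : cassinian D x y < t) :
    dist x y < t * infDist x (frontier D) * (infDist x (frontier D) + dist x y) := by
  -- Test the supremum at a boundary point nearest to `x`.
  obtain ⟨p, hp, hxp⟩ := isClosed_frontier.exists_infDist_eq_dist hfr x
  have hpy : 0 < dist p y :=
    (hD.infDist_frontier_pos hfr hy).trans_le (dist_comm y p ▸ infDist_le_dist_of_mem hp)
  have hδ := hD.infDist_frontier_pos hfr hx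
  have hlt := (div_le_cassinian hD hfr hx hy hp).trans_lt hc
  rw [← hxp, div_lt_iff₀ (by positivity)] at hlt
  have hpy_le : dist p y ≤ infDist x (frontier D) + dist x y := by
    linarith [dist_triangle p x y, dist_comm p x]
  nlinarith [dist_nonneg (x := x) (y := y)]

theorem cassinian_lt_of_quasiHyperDist_lt (hD : IsOpen D) (hconn : IsPreconnected D)
    (hfr : (frontier D).Nonempty) (hx : x ∈ D) (hy : y ∈ D) {t : ℝ} (ht : 0 < t)
    (hk : quasiHyperDist D x y <
      log (1 + t * infDist x (frontier D) / (1 + t * infDist x (frontier D)))) :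
    cassinian D x y < t := by
  set δ := infDist x (frontier D)
  have hδ : 0 < δ := hD.infDist_frontier_pos hfr hx
  have hlog := (log_one_add_dist_div_le_quasiHyperDist_s18 hD hconn hfr hx hy).trans_lt hk
  rw [log_lt_log_iff (by positivity) (by positivity), add_lt_add_iff_left,
    div_lt_div_iff₀ hδ (by positivity)] at hlog
  have hd : dist x y < δ := by nlinarith [mul_pos ht hδ]
  calc cassinian D x y ≤ dist x y / (δ * (δ - dist x y)) := cassinian_le_of_dist_lt hd
    _ < t := by
      rw [div_lt_iff₀ (mul_pos hδ (sub_pos.2 hd))]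
      nlinarith

theorem quasiHyperDist_lt_of_cassinian_lt (hD : IsOpen D) (hfr : (frontier D).Nonempty)
    (hx : x ∈ D) (hy : y ∈ D) {t : ℝ}
    (ht : t * infDist x (frontier D) * (1 + log 2) < log 2) (hc : cassinian D x y < t) :
    quasiHyperDist D x y <
      log (1 / (2 - exp (t * infDist x (frontier D) / (1 - t * infDist x (frontier D))))) := by
  set δ := infDist x (frontier D)
  set d := dist x y
  have hδ : 0 < δ := hD.infDist_frontier_pos hfr hx
  have hlog2 : 0 < log 2 := log_pos one_lt_two
  have htδ : 0 < 1 - t * δ := by nlinarith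
  set v := t * δ / (1 - t * δ)
  have hv : v < log 2 := by rw [div_lt_iff₀ htδ]; linarith
  have hdv : d < δ * v := by
    rw [mul_div_assoc', lt_div_iff₀ htδ]
    nlinarith [dist_lt_of_cassinian_lt hD hfr hx hy hc]
  have hexp : 0 < 2 - exp v := by
    linarith [exp_lt_exp.2 hv, exp_log two_pos]
  -- `δ (2 - exp v) ≤ δ (1 - v) < δ - d`
  have hd : δ * (2 - exp v) < δ - d := by nlinarith [add_one_le_exp v]
  calc quasiHyperDist D x y ≤ log (δ / (δ - d)) :=
        quasiHyperDist_le_log_of_dist_lt hD hx (by nlinarith)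
    _ < log (1 / (2 - exp v)) := by
      refine log_lt_log (div_pos hδ (by nlinarith)) ?_
      rw [div_lt_div_iff₀ (by nlinarith) hexp]
      linarith

theorem quasihyperbolicBall_subset_cassinianBall_subset_general (n : ℕ)
    (D : Set (E n)) (hD : IsOpen D) (hDconn : IsConnected D)
    (x : E n) (hx : x ∈ D) (t : ℝ) (ht : 0 < t)
    (ht1 : t < Real.log 2 / (infDist x (frontier D) * (1 + Real.log 2))) :
    {y ∈ D | quasiHyperDist D x y
          < Real.log (1 + t * infDist x (frontier D) / (1 + t * infDist x (frontier D)))}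
        ⊆ {y ∈ D | cassinian D x y < t} ∧
      {y ∈ D | cassinian D x y < t}
        ⊆ {y ∈ D | quasiHyperDist D x y
          < Real.log (1 / (2 - Real.exp
              (t * infDist x (frontier D) / (1 - t * infDist x (frontier D)))))} := by
  have hδ : 0 < infDist x (frontier D) := by
    refine infDist_nonneg.lt_of_ne fun h => ?_
    rw [← h, zero_mul, div_zero] at ht1
    exact ht.not_gt ht1
  have hfr : (frontier D).Nonempty := by
    by_contra h
    rw [not_nonempty_iff_eq_empty.1 h, infDist_empty] at hδ
    exact hδ.false
  have ht2 : t * infDist x (frontier D) * (1 + log 2) < log 2 := by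
    rwa [lt_div_iff₀ (by positivity), ← mul_assoc] at ht1
  exact ⟨fun y ⟨hy, hk⟩ => ⟨hy, cassinian_lt_of_quasiHyperDist_lt hD hDconn.isPreconnected hfr
      hx hy ht hk⟩,
    fun y ⟨hy, hc⟩ => ⟨hy, quasiHyperDist_lt_of_cassinian_lt hD hfr hx hy ht2 hc⟩⟩

/-- **Inclusion of Cassinian balls between quasihyperbolic balls.**
Let `D ⊊ ℝⁿ` be a domain, `x ∈ D` and `0 < t < log 2/(δ_D(x)(1 + log 2))`.  Then
`B_k(x,r) ⊆ B_c(x,t) ⊆ B_k(x,R)` with `r = log(1 + t δ_D(x)/(1+t δ_D(x)))` and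
`R = log(1/(2 - exp(t δ_D(x)/(1-t δ_D(x)))))`. -/
theorem quasihyperbolicBall_subset_cassinianBall_subset (n : ℕ) (hn : 2 ≤ n)
    (D : Set (E n)) (hD : IsOpen D) (hDconn : IsConnected D) (hDproper : D ≠ univ)
    (x : E n) (hx : x ∈ D) (t : ℝ) (ht : 0 < t)
    (ht1 : t < Real.log 2 / (infDist x (frontier D) * (1 + Real.log 2))) :
    {y ∈ D | quasiHyperDist D x y
          < Real.log (1 + t * infDist x (frontier D) / (1 + t * infDist x (frontier D)))}
        ⊆ {y ∈ D | cassinian D x y < t} ∧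
      {y ∈ D | cassinian D x y < t}
        ⊆ {y ∈ D | quasiHyperDist D x y
          < Real.log (1 / (2 - Real.exp
              (t * infDist x (frontier D) / (1 - t * infDist x (frontier D)))))} :=
  quasihyperbolicBall_subset_cassinianBall_subset_general n D hD hDconn x hx t ht ht1
end
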